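/- arXiv:1510.04710 — 6 statements merged into one kernel-verified Lean document; each statement's English description precedes it below -/
import Mathlib

section
/- For every integer k ≥ 1, the function f_k is radial and radially nonincreasing: f_k(x) depends only on |x|, and for all x, y ∈ ℝⁿ with |x| ≤ |y| one has f_k(x) ≥ f_k(y). -/
open MeasureTheory

/-- Density of the uniform distribution on the open ball `B_ε(0) ⊆ ℝⁿ`. -/
noncomputable def uniformBallDensity (n : ℕ) (ε : ℝ) : EuclideanSpace ℝ (Fin n) → ℝ :=
  Set.indicator (Metric.ball (0 : EuclideanSpace ℝ (Fin n)) ε)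
    (fun _ => ((volume (Metric.ball (0 : EuclideanSpace ℝ (Fin n)) ε)).toReal)⁻¹)

/-- `sumDensity n ε k` is the density `f_k` of the sum of `k` independent random vectors,
each uniformly distributed in the open ball `B_ε(0) ⊆ ℝⁿ`, defined by iterated convolution. -/
noncomputable def sumDensity (n : ℕ) (ε : ℝ) : ℕ → EuclideanSpace ℝ (Fin n) → ℝ
  | 0 => fun _ => 0
  | 1 => uniformBallDensity n ε
  | (k + 2) => fun x => ∫ y, sumDensity n ε (k + 1) (x - y) * uniformBallDensity n ε y

open Metric
open scoped ENNReal

variable {n : ℕ}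

/-- A set is "radially down-closed": membership depends only on the norm, monotonically. -/
def RadSet (S : Set (EuclideanSpace ℝ (Fin n))) : Prop :=
  ∀ ⦃z w : EuclideanSpace ℝ (Fin n)⦄, ‖w‖ ≤ ‖z‖ → z ∈ S → w ∈ S

noncomputable def negCoord (i : Fin n) :
    EuclideanSpace ℝ (Fin n) ≃ₗᵢ[ℝ] EuclideanSpace ℝ (Fin n) :=
  LinearIsometryEquiv.piLpCongrRight 2
    (fun j => if j = i then LinearIsometryEquiv.neg ℝ else LinearIsometryEquiv.refl ℝ ℝ)

lemma negCoord_apply (i j : Fin n) (z : EuclideanSpace ℝ (Fin n)) :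
    negCoord i z j = if j = i then -(z j) else z j := by
  rcases eq_or_ne j i with rfl | h
  · simp [negCoord]
  · simp [negCoord, h]

lemma negCoord_single (i : Fin n) :
    negCoord i (EuclideanSpace.single i (1:ℝ)) = -(EuclideanSpace.single i (1:ℝ)) := by
  ext j
  by_cases h : j = i <;>
    simp [negCoord_apply, h, EuclideanSpace.single_apply]

lemma radSet_inter_ball_axis (hn : 1 ≤ n) {ε : ℝ}
    {S : Set (EuclideanSpace ℝ (Fin n))} (hS : MeasurableSet S) (hrad : RadSet S)
    {a b : ℝ} (ha : 0 ≤ a) (hab : a ≤ b) :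
    let e : EuclideanSpace ℝ (Fin n) := EuclideanSpace.single ⟨0, hn⟩ (1:ℝ)
    volume (S ∩ ball (b • e) ε) ≤ volume (S ∩ ball (a • e) ε) := by
  intro e
  rcases eq_or_lt_of_le hab with rfl | hab'
  · exact le_rfl
  set i : Fin n := ⟨0, hn⟩
  set R := negCoord i with hR
  have he : ‖e‖ = 1 := by simp [e, EuclideanSpace.norm_single]
  set σ : EuclideanSpace ℝ (Fin n) → EuclideanSpace ℝ (Fin n) :=
    fun z => (a + b) • e + R z with hσ
  have hσmp : MeasurePreserving σ volume volume :=
    (measurePreserving_add_left volume ((a + b) • e)).comp R.measurePreserving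
  have hRe : R e = -e := negCoord_single i
  have hd1 : ∀ z, σ z - a • e = R (z - b • e) := by
    intro z
    simp only [hσ, map_sub, LinearIsometryEquiv.map_smul, hRe]
    module
  have hd2 : ∀ z, σ z - b • e = R (z - a • e) := by
    intro z
    simp only [hσ, map_sub, LinearIsometryEquiv.map_smul, hRe]
    module
  have hsub : (S ∩ ball (b • e) ε) \ ball (a • e) ε ⊆
      σ ⁻¹' ((S ∩ ball (a • e) ε) \ ball (b • e) ε) := by
    rintro z ⟨⟨hzS, hzb⟩, hza⟩
    rw [mem_ball_iff_norm] at hzb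
    rw [mem_ball_iff_norm] at hza
    push_neg at hza
    set t : ℝ := z i with ht
    have hinz : (inner ℝ z e : ℝ) = t := by
      simp [e, EuclideanSpace.inner_single_right]
      rfl
    have hsq : ‖z - b • e‖ ^ 2 < ‖z - a • e‖ ^ 2 := by
      have h1 : 0 ≤ ‖z - b • e‖ := norm_nonneg _
      have h2 : ‖z - b • e‖ < ‖z - a • e‖ := lt_of_lt_of_le hzb hza
      nlinarith
    have hexp : ∀ c : ℝ, ‖z - c • e‖ ^ 2 = ‖z‖ ^ 2 - 2 * c * t + c ^ 2 := by
      intro c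
      rw [@norm_sub_sq_real]
      rw [real_inner_smul_right, hinz, norm_smul, he]
      simp [mul_pow, sq_abs]
      ring
    rw [hexp a, hexp b] at hsq
    have htab : a + b ≤ 2 * t := by nlinarith
    have ht0 : 0 ≤ t := by nlinarith
    have hRzi : (inner ℝ (R z) e : ℝ) = -t := by
      have : R z i = -(z i) := by simp [hR, negCoord_apply]
      simp [e, EuclideanSpace.inner_single_right, this]
      exact this
    have hσnorm : ‖σ z‖ ≤ ‖z‖ := by
      have : ‖σ z‖ ^ 2 ≤ ‖z‖ ^ 2 := by
        rw [hσ]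
        rw [@norm_add_sq_real]
        rw [real_inner_smul_left, real_inner_comm, hRzi, norm_smul, he,
          R.norm_map]
        simp [mul_pow, sq_abs]
        nlinarith
      nlinarith [norm_nonneg (σ z), norm_nonneg z]
    refine ⟨⟨hrad hσnorm hzS, ?_⟩, ?_⟩
    · rw [mem_ball_iff_norm, hd1, R.norm_map]
      exact hzb
    · rw [mem_ball_iff_norm, hd2, R.norm_map]
      push_neg
      exact hza
  have hBa : MeasurableSet (ball (a • e) ε) := measurableSet_ball
  have hBb : MeasurableSet (ball (b • e) ε) := measurableSet_ball
  calc volume (S ∩ ball (b • e) ε)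
      = volume ((S ∩ ball (b • e) ε) ∩ ball (a • e) ε)
        + volume ((S ∩ ball (b • e) ε) \ ball (a • e) ε) :=
        (measure_inter_add_diff _ hBa).symm
    _ ≤ volume ((S ∩ ball (a • e) ε) ∩ ball (b • e) ε)
        + volume ((S ∩ ball (a • e) ε) \ ball (b • e) ε) := by
        refine add_le_add (measure_mono fun z hz => ⟨⟨hz.1.1, hz.2⟩, hz.1.2⟩) ?_
        calc volume ((S ∩ ball (b • e) ε) \ ball (a • e) ε)
            ≤ volume (σ ⁻¹' ((S ∩ ball (a • e) ε) \ ball (b • e) ε)) :=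
            measure_mono hsub
          _ = volume ((S ∩ ball (a • e) ε) \ ball (b • e) ε) :=
            hσmp.measure_preimage (((hS.inter hBa).diff hBb).nullMeasurableSet)
    _ = volume (S ∩ ball (a • e) ε) := measure_inter_add_diff _ hBb

lemma radSet_inter_ball_radial {ε : ℝ}
    {S : Set (EuclideanSpace ℝ (Fin n))} (hS : MeasurableSet S) (hrad : RadSet S)
    {x y : EuclideanSpace ℝ (Fin n)} (h : ‖x‖ = ‖y‖) :
    volume (S ∩ ball x ε) = volume (S ∩ ball y ε) := by
  set T := Submodule.reflection (ℝ ∙ (x - y))ᗮ with hT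
  have hTx : T x = y := Submodule.reflection_sub h
  have hpre : T ⁻¹' (S ∩ ball y ε) = S ∩ ball x ε := by
    ext z
    simp only [Set.mem_preimage, Set.mem_inter_iff, mem_ball_iff_norm]
    constructor
    · rintro ⟨h1, h2⟩
      refine ⟨hrad (by rw [T.norm_map]) h1, ?_⟩
      rwa [← hTx, ← map_sub, T.norm_map] at h2
    · rintro ⟨h1, h2⟩
      refine ⟨hrad (by rw [T.norm_map]) h1, ?_⟩
      rwa [← hTx, ← map_sub, T.norm_map]
  rw [← hpre]
  exact T.measurePreserving.measure_preimage
    ((hS.inter measurableSet_ball).nullMeasurableSet)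

lemma radSet_inter_ball_mono (hn : 1 ≤ n) {ε : ℝ}
    {S : Set (EuclideanSpace ℝ (Fin n))} (hS : MeasurableSet S) (hrad : RadSet S)
    {x y : EuclideanSpace ℝ (Fin n)} (h : ‖x‖ ≤ ‖y‖) :
    volume (S ∩ ball y ε) ≤ volume (S ∩ ball x ε) := by
  set e : EuclideanSpace ℝ (Fin n) := EuclideanSpace.single ⟨0, hn⟩ (1:ℝ) with he
  have hnorm : ∀ c : ℝ, 0 ≤ c → ‖c • e‖ = c := by
    intro c hc
    rw [norm_smul, he, EuclideanSpace.norm_single]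
    simp [abs_of_nonneg hc]
  rw [radSet_inter_ball_radial hS hrad (x := y) (y := ‖y‖ • e)
      (by rw [hnorm _ (norm_nonneg y)]),
    radSet_inter_ball_radial hS hrad (x := x) (y := ‖x‖ • e)
      (by rw [hnorm _ (norm_nonneg x)])]
  exact radSet_inter_ball_axis hn hS hrad (norm_nonneg x) h

section Analytic

variable {n : ℕ} {ε : ℝ}

lemma conv_repr (f : EuclideanSpace ℝ (Fin n) → ℝ) (hf : Measurable f)
    (hnn : ∀ z, 0 ≤ f z) (x : EuclideanSpace ℝ (Fin n)) :
    ∫ y, f (x - y) * uniformBallDensity n ε y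
      = ((volume (ball (0 : EuclideanSpace ℝ (Fin n)) ε)).toReal)⁻¹
        * (∫⁻ z in ball x ε, ENNReal.ofReal (f z)).toReal := by
  set c : ℝ := ((volume (ball (0 : EuclideanSpace ℝ (Fin n)) ε)).toReal)⁻¹ with hc
  have hmp : MeasurePreserving (fun z : EuclideanSpace ℝ (Fin n) => x - z)
      volume volume := Measure.measurePreserving_sub_left volume x
  have h1 : ∫ y, f (x - y) * uniformBallDensity n ε y
      = ∫ z, f z * uniformBallDensity n ε (x - z) := by
    rw [← hmp.integral_comp (MeasurableEquiv.subLeft x).measurableEmbedding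
      (fun y => f (x - y) * uniformBallDensity n ε y)]
    simp [sub_sub_cancel]
  have h2 : ∀ z, f z * uniformBallDensity n ε (x - z)
      = (ball x ε).indicator (fun w => c * f w) z := by
    intro z
    have hmem : (x - z ∈ ball (0 : EuclideanSpace ℝ (Fin n)) ε) ↔ z ∈ ball x ε := by
      rw [mem_ball_zero_iff, mem_ball_iff_norm, norm_sub_rev]
    by_cases hz : z ∈ ball x ε <;>
      simp [uniformBallDensity, Set.indicator_apply, hmem, hz, ← hc, mul_comm]
  rw [h1]
  simp_rw [h2]
  rw [integral_indicator measurableSet_ball, integral_const_mul]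
  congr 1
  exact integral_eq_lintegral_of_nonneg_ae (ae_of_all _ hnn) hf.aestronglyMeasurable

lemma sumDensity_good (hn : 1 ≤ n) (hε : 0 < ε) (k : ℕ) :
    Measurable (sumDensity n ε (k+1)) ∧ (∀ x, 0 ≤ sumDensity n ε (k+1) x) ∧
    (∀ x, sumDensity n ε (k+1) x
      ≤ ((volume (ball (0 : EuclideanSpace ℝ (Fin n)) ε)).toReal)⁻¹) ∧
    (∀ x y, ‖x‖ ≤ ‖y‖ → sumDensity n ε (k+1) y ≤ sumDensity n ε (k+1) x) := by
  set c : ℝ := ((volume (ball (0 : EuclideanSpace ℝ (Fin n)) ε)).toReal)⁻¹ with hc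
  have hVpos : 0 < (volume (ball (0 : EuclideanSpace ℝ (Fin n)) ε)).toReal :=
    ENNReal.toReal_pos (measure_ball_pos volume 0 hε).ne' measure_ball_lt_top.ne
  have hc0 : 0 ≤ c := inv_nonneg.mpr hVpos.le
  induction k with
  | zero =>
    have hone : sumDensity n ε 1 = uniformBallDensity n ε := rfl
    rw [hone]
    refine ⟨measurable_const.indicator measurableSet_ball,
      fun x => Set.indicator_nonneg (fun _ _ => hc0) x, fun x => ?_, fun x y h => ?_⟩
    · by_cases hx : x ∈ ball (0 : EuclideanSpace ℝ (Fin n)) ε <;>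
        simp [uniformBallDensity, hx, hc0, ← hc]
    · by_cases hy : y ∈ ball (0 : EuclideanSpace ℝ (Fin n)) ε
      · have hx : x ∈ ball (0 : EuclideanSpace ℝ (Fin n)) ε := by
          rw [mem_ball_zero_iff] at hy ⊢
          exact lt_of_le_of_lt h hy
        simp [uniformBallDensity, hx, hy]
      · simpa [uniformBallDensity, hy] using
          Set.indicator_nonneg (fun _ _ => hc0) x
  | succ m ih =>
    obtain ⟨hm, hnn, hbd, hmono⟩ := ih
    set f := sumDensity n ε (m+1) with hf
    set L : EuclideanSpace ℝ (Fin n) → ℝ≥0∞ :=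
      fun x => ∫⁻ z in ball x ε, ENNReal.ofReal (f z) with hL
    have hrepr : ∀ x, sumDensity n ε (m+2) x = c * (L x).toReal := by
      intro x
      have : sumDensity n ε (m+2) x = ∫ y, f (x - y) * uniformBallDensity n ε y := rfl
      rw [this, conv_repr f hm hnn x]
    have hLle : ∀ x, L x ≤ ENNReal.ofReal c
        * volume (ball (0 : EuclideanSpace ℝ (Fin n)) ε) := by
      intro x
      calc L x ≤ ∫⁻ _ in ball x ε, ENNReal.ofReal c :=
            lintegral_mono fun z => ENNReal.ofReal_le_ofReal (hbd z)
        _ = ENNReal.ofReal c * volume (ball x ε) := setLIntegral_const _ _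
        _ = _ := by rw [Measure.addHaar_ball_center]
    have hLtop : ∀ x, L x ≠ ⊤ := by
      intro x
      exact (lt_of_le_of_lt (hLle x)
        (ENNReal.mul_lt_top ENNReal.ofReal_lt_top measure_ball_lt_top)).ne
    have hSmeas : ∀ t : ℝ, MeasurableSet {a : EuclideanSpace ℝ (Fin n) | t < f a} :=
      fun t => measurableSet_lt measurable_const hm
    have hLmono : ∀ x y, ‖x‖ ≤ ‖y‖ → L y ≤ L x := by
      intro x y h
      have hub : ∀ u : EuclideanSpace ℝ (Fin n),
          L u = ∫⁻ t in Set.Ioi (0:ℝ), volume ({a | t < f a} ∩ ball u ε) := by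
        intro u
        simp only [hL]
        rw [lintegral_eq_lintegral_meas_lt _ (ae_of_all _ hnn) hm.aemeasurable]
        exact lintegral_congr fun t => by rw [Measure.restrict_apply (hSmeas t)]
      rw [hub x, hub y]
      refine lintegral_mono fun t => ?_
      exact radSet_inter_ball_mono hn (hSmeas t)
        (fun z w hw hz => lt_of_lt_of_le hz (hmono w z hw)) h
    have hLm : Measurable L := by
      have hset : MeasurableSet {p : EuclideanSpace ℝ (Fin n) × EuclideanSpace ℝ (Fin n) |
          dist p.2 p.1 < ε} :=
        (isOpen_lt (continuous_snd.dist continuous_fst) continuous_const).measurableSet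
      have hFm : Measurable fun p : EuclideanSpace ℝ (Fin n) × EuclideanSpace ℝ (Fin n) =>
          ({p : EuclideanSpace ℝ (Fin n) × EuclideanSpace ℝ (Fin n) | dist p.2 p.1 < ε}.indicator
            (fun q => ENNReal.ofReal (f q.2))) p :=
        (ENNReal.measurable_ofReal.comp (hm.comp measurable_snd)).indicator hset
      have h1 : ∀ x, L x = ∫⁻ z,
          ({p : EuclideanSpace ℝ (Fin n) × EuclideanSpace ℝ (Fin n) | dist p.2 p.1 < ε}.indicator
            (fun q => ENNReal.ofReal (f q.2))) (x, z) := by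
        intro x
        simp only [hL]
        rw [← lintegral_indicator measurableSet_ball]
        refine lintegral_congr fun z => ?_
        by_cases hz : dist z x < ε
        · rw [Set.indicator_of_mem (Metric.mem_ball.mpr hz),
            Set.indicator_of_mem
              (show (x, z) ∈ {p : EuclideanSpace ℝ (Fin n) × EuclideanSpace ℝ (Fin n) |
                dist p.2 p.1 < ε} from hz)]
        · rw [Set.indicator_of_notMem (fun hmem => hz (Metric.mem_ball.mp hmem)),
            Set.indicator_of_notMem
              (show (x, z) ∉ {p : EuclideanSpace ℝ (Fin n) × EuclideanSpace ℝ (Fin n) |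
                dist p.2 p.1 < ε} from hz)]
      rw [funext h1]
      exact hFm.lintegral_prod_right'
    have hreprf : sumDensity n ε (m+2) = fun x => c * (L x).toReal := funext hrepr
    refine ⟨?_, ?_, ?_, ?_⟩
    · rw [hreprf]
      exact measurable_const.mul hLm.ennreal_toReal
    · intro x
      rw [hrepr x]
      exact mul_nonneg hc0 ENNReal.toReal_nonneg
    · intro x
      rw [hrepr x]
      have h1 : (L x).toReal ≤ (ENNReal.ofReal c
          * volume (ball (0 : EuclideanSpace ℝ (Fin n)) ε)).toReal :=
        ENNReal.toReal_mono
          (ENNReal.mul_lt_top ENNReal.ofReal_lt_top measure_ball_lt_top).ne (hLle x)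
      rw [ENNReal.toReal_mul, ENNReal.toReal_ofReal hc0] at h1
      calc c * (L x).toReal
          ≤ c * (c * (volume (ball (0 : EuclideanSpace ℝ (Fin n)) ε)).toReal) := by
            exact mul_le_mul_of_nonneg_left h1 hc0
        _ = c := by
            rw [hc]
            field_simp
    · intro x y h
      rw [hrepr x, hrepr y]
      exact mul_le_mul_of_nonneg_left
        (ENNReal.toReal_mono (hLtop x) (hLmono x y h)) hc0

end Analytic

theorem density_radial_decreasing (n : ℕ) (hn : 1 ≤ n) (ε : ℝ) (hε : 0 < ε)
    (k : ℕ) (hk : 1 ≤ k) :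
    (∀ x y : EuclideanSpace ℝ (Fin n), ‖x‖ = ‖y‖ → sumDensity n ε k x = sumDensity n ε k y) ∧
    (∀ x y : EuclideanSpace ℝ (Fin n), ‖x‖ ≤ ‖y‖ → sumDensity n ε k y ≤ sumDensity n ε k x) := by
  obtain ⟨m, rfl⟩ : ∃ m, k = m + 1 := ⟨k - 1, (Nat.succ_pred_eq_of_pos hk).symm⟩
  obtain ⟨-, -, -, hmono⟩ := sumDensity_good hn hε m
  exact ⟨fun x y h => le_antisymm (hmono y x h.ge) (hmono x y h.le), hmono⟩
end

section
/- Let n ≥ 2, ε > 0, and let Z be a random vector uniformly distributed on the open Euclidean ball B_ε(0) ⊂ ℝⁿ. Then for every u ∈ ℝⁿ with u ≠ 0, the characteristic function of Z satisfies E[e^{i⟨u,Z⟩}] = (ω_{n−1}/ωₙ) · ∫_{−1}^{1} (1 − s²)^{(n−1)/2} · cos(ε·|u|·s) ds, where ω_m denotes the Lebesgue measure of the unit ball in ℝ^m. In particular, the characteristic function of Z at u depends only on |u|. -/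
open MeasureTheory Metric


theorem sliceSet_vol (m : ℕ) [Nontrivial (EuclideanSpace ℝ (Fin m))] (r : ℝ) :
    volume {y : Fin m → ℝ | ∑ i, y i ^ 2 < r} =
      ENNReal.ofReal (Real.sqrt r ^ m) * volume (ball (0 : EuclideanSpace ℝ (Fin m)) 1) := by
  rcases le_or_gt r 0 with hr | hr
  · have h1 : {y : Fin m → ℝ | ∑ i, y i ^ 2 < r} = ∅ := by
      ext y
      simp only [Set.mem_setOf_eq, Set.mem_empty_iff_false, iff_false, not_lt]
      exact le_trans hr (Finset.sum_nonneg fun i _ => sq_nonneg _)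
    have h2 : Real.sqrt r = 0 := Real.sqrt_eq_zero'.mpr hr
    have hm : m ≠ 0 := by
      rintro rfl
      exact not_nontrivial _ ‹Nontrivial (EuclideanSpace ℝ (Fin 0))›
    rw [h1, h2, zero_pow hm]
    simp
  · have hpre : (MeasurableEquiv.toLp 2 (Fin m → ℝ)).symm.symm ⁻¹'
        (ball (0 : EuclideanSpace ℝ (Fin m)) (Real.sqrt r))
        = {y : Fin m → ℝ | ∑ i, y i ^ 2 < r} := by
      ext y
      have hy : ∀ i, ‖((MeasurableEquiv.toLp 2 (Fin m → ℝ)).symm.symm y) i‖ ^ 2 = y i ^ 2 :=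
        fun i => by rw [Real.norm_eq_abs, sq_abs]; rfl
      simp only [Set.mem_preimage, mem_ball_zero_iff, EuclideanSpace.norm_eq, Set.mem_setOf_eq]
      rw [Finset.sum_congr rfl fun i _ => hy i,
        Real.sqrt_lt_sqrt_iff (Finset.sum_nonneg fun i _ => sq_nonneg _)]
    rw [← hpre, (((EuclideanSpace.volume_preserving_symm_measurableEquiv_toLp (Fin m)).symm)).measure_preimage
        measurableSet_ball.nullMeasurableSet,
      Measure.addHaar_ball _ _ (Real.sqrt_nonneg r), finrank_euclideanSpace_fin]

theorem key_slice (m : ℕ) [Nontrivial (EuclideanSpace ℝ (Fin m))] (ε : ℝ) (hε : 0 < ε) (c : ℝ) :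
    ∫ x in ball (0 : EuclideanSpace ℝ (Fin (m+1))) ε,
        Complex.exp (Complex.I * (c * x 0)) =
      ∫ t in Set.Ioo (-ε) ε,
        ((volume (ball (0 : EuclideanSpace ℝ (Fin m)) 1)).toReal
          * Real.sqrt (ε ^ 2 - t ^ 2) ^ m) • Complex.exp (Complex.I * (c * t)) := by
  have hm : m ≠ 0 := by
    rintro rfl
    exact not_nontrivial _ ‹Nontrivial (EuclideanSpace ℝ (Fin 0))›
  -- step 1: to pi space
  have h1 := (((EuclideanSpace.volume_preserving_symm_measurableEquiv_toLp (Fin (m+1))).symm)).setIntegral_preimage_emb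
    (MeasurableEquiv.measurableEmbedding _)
    (fun x : EuclideanSpace ℝ (Fin (m+1)) => Complex.exp (Complex.I * (c * x 0)))
    (ball (0 : EuclideanSpace ℝ (Fin (m+1))) ε)
  rw [← h1]
  have hpre : (MeasurableEquiv.toLp 2 (Fin (m+1) → ℝ)).symm.symm ⁻¹'
      (ball (0 : EuclideanSpace ℝ (Fin (m+1))) ε)
      = {y : Fin (m+1) → ℝ | ∑ i, y i ^ 2 < ε ^ 2} := by
    ext y
    have hy : ∀ i, ‖((MeasurableEquiv.toLp 2 (Fin (m+1) → ℝ)).symm.symm y) i‖ ^ 2 = y i ^ 2 :=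
      fun i => by rw [Real.norm_eq_abs, sq_abs]; rfl
    simp only [Set.mem_preimage, mem_ball_zero_iff, EuclideanSpace.norm_eq, Set.mem_setOf_eq]
    rw [Finset.sum_congr rfl fun i _ => hy i, Real.sqrt_lt' hε]
  rw [hpre]
  have happ : ∀ y : Fin (m+1) → ℝ,
      ((MeasurableEquiv.toLp 2 (Fin (m+1) → ℝ)).symm.symm y) 0 = y 0 := fun _ => rfl
  simp only [happ]
  -- step 2: to ℝ × (Fin m → ℝ)
  have hSmeas : MeasurableSet {y : Fin (m+1) → ℝ | ∑ i, y i ^ 2 < ε ^ 2} := by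
    apply measurableSet_lt
    · exact Finset.measurable_sum _ fun i _ => (measurable_pi_apply i).pow_const 2
    · exact measurable_const
  have h2 := ((volume_preserving_piFinSuccAbove (fun _ : Fin (m+1) => ℝ) 0).symm).setIntegral_preimage_emb
    (MeasurableEquiv.measurableEmbedding _)
    (fun y : Fin (m+1) → ℝ => Complex.exp (Complex.I * (c * y 0)))
    {y : Fin (m+1) → ℝ | ∑ i, y i ^ 2 < ε ^ 2}
  rw [← h2]
  have hsymm : ∀ p : ℝ × (Fin m → ℝ),
      (MeasurableEquiv.piFinSuccAbove (fun _ : Fin (m+1) => ℝ) 0).symm p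
        = Fin.cons p.1 p.2 := by
    intro p; simp [MeasurableEquiv.piFinSuccAbove]; rfl
  set T : Set (ℝ × (Fin m → ℝ)) := {p | p.1 ^ 2 + ∑ j, p.2 j ^ 2 < ε ^ 2} with hT
  have hpre2 : (MeasurableEquiv.piFinSuccAbove (fun _ : Fin (m+1) => ℝ) 0).symm ⁻¹'
      {y : Fin (m+1) → ℝ | ∑ i, y i ^ 2 < ε ^ 2} = T := by
    ext p
    simp only [Set.mem_preimage, Set.mem_setOf_eq, hsymm, hT]
    rw [Fin.sum_univ_succ]
    simp
  have happ2 : ∀ p : ℝ × (Fin m → ℝ),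
      ((MeasurableEquiv.piFinSuccAbove (fun _ : Fin (m+1) => ℝ) 0).symm p) 0 = p.1 := by
    intro p; rw [hsymm]; simp
  rw [hpre2]
  simp only [happ2]
  -- step 3: Fubini
  have hTmeas : MeasurableSet T := by
    apply measurableSet_lt
    · exact ((measurable_fst.pow_const 2).add
        (Finset.measurable_sum _ fun j _ => (measurable_snd.comp measurable_id).eval.pow_const 2))
    · exact measurable_const
  have hμT : volume T ≠ ⊤ := by
    have h4 : volume T = volume (ball (0 : EuclideanSpace ℝ (Fin (m+1))) ε) := by
      rw [← hpre2,
        ((volume_preserving_piFinSuccAbove (fun _ : Fin (m+1) => ℝ) 0).symm).measure_preimage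
          hSmeas.nullMeasurableSet,
        ← hpre,
        (((EuclideanSpace.volume_preserving_symm_measurableEquiv_toLp (Fin (m+1))).symm)).measure_preimage
          measurableSet_ball.nullMeasurableSet]
    rw [h4]
    exact measure_ball_lt_top.ne
  have hf_int : Integrable (T.indicator fun p : ℝ × (Fin m → ℝ) =>
      Complex.exp (Complex.I * (c * p.1))) volume := by
    rw [integrable_indicator_iff hTmeas]
    apply Measure.integrableOn_of_bounded (M := 1) hμT
    · exact Continuous.aestronglyMeasurable (Complex.continuous_exp.comp
        (continuous_const.mul (continuous_const.mul
          (Complex.continuous_ofReal.comp continuous_fst))))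
    · filter_upwards with p
      simp [Complex.norm_exp]
  rw [← integral_indicator hTmeas]
  rw [Measure.volume_eq_prod] at hf_int ⊢
  rw [integral_prod _ hf_int]
  have inner : ∀ x : ℝ, (∫ y : Fin m → ℝ,
        T.indicator (fun p => Complex.exp (Complex.I * (c * p.1))) (x, y))
      = ((volume (ball (0 : EuclideanSpace ℝ (Fin m)) 1)).toReal
          * Real.sqrt (ε ^ 2 - x ^ 2) ^ m) • Complex.exp (Complex.I * (c * x)) := by
    intro x
    have hmeas' : MeasurableSet {y : Fin m → ℝ | ∑ j, y j ^ 2 < ε ^ 2 - x ^ 2} := by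
      apply measurableSet_lt
      · exact Finset.measurable_sum _ fun j _ => (measurable_pi_apply j).pow_const 2
      · exact measurable_const
    have heq : (fun y : Fin m → ℝ =>
        T.indicator (fun p => Complex.exp (Complex.I * (c * p.1))) (x, y))
        = Set.indicator {y : Fin m → ℝ | ∑ j, y j ^ 2 < ε ^ 2 - x ^ 2}
            (fun _ => Complex.exp (Complex.I * (c * x))) := by
      ext y
      have hiff : (x, y) ∈ T ↔ y ∈ {y : Fin m → ℝ | ∑ j, y j ^ 2 < ε ^ 2 - x ^ 2} := by
        simp only [hT, Set.mem_setOf_eq]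
        constructor <;> intro <;> linarith
      by_cases h : (x, y) ∈ T
      · rw [Set.indicator_of_mem h, Set.indicator_of_mem (hiff.mp h)]
      · rw [Set.indicator_of_notMem h, Set.indicator_of_notMem (fun hc => h (hiff.mpr hc))]
    rw [heq, integral_indicator_const _ hmeas', measureReal_def, sliceSet_vol, ENNReal.toReal_mul,
      ENNReal.toReal_ofReal (pow_nonneg (Real.sqrt_nonneg _) m), mul_comm]
  simp only [inner]
  rw [setIntegral_eq_integral_of_forall_compl_eq_zero]
  intro x hx
  have hx' : ε ^ 2 - x ^ 2 ≤ 0 := by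
    simp only [Set.mem_Ioo, not_and_or, not_lt] at hx
    rcases hx with h | h <;> nlinarith
  rw [Real.sqrt_eq_zero'.mpr hx', zero_pow hm, mul_zero, zero_smul]


theorem odd_part_zero (f : ℝ → ℝ) (hodd : ∀ x, f (-x) = - f x) :
    ∫ s in (-1:ℝ)..1, f s = 0 := by
  have h := intervalIntegral.integral_comp_neg (a := (-1:ℝ)) (b := 1) f
  simp only [neg_neg] at h
  simp only [hodd] at h
  rw [intervalIntegral.integral_neg] at h
  linarith

theorem main_calc (m : ℕ) (ε d A B : ℝ) (hε : 0 < ε) :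
    (ε ^ (m+1) * B)⁻¹ • ∫ t in Set.Ioo (-ε) ε,
        (A * Real.sqrt (ε ^ 2 - t ^ 2) ^ m) • Complex.exp (Complex.I * (d * t))
      = ((A / B * ∫ s in (-1:ℝ)..1, (1 - s ^ 2) ^ ((m:ℝ)/2) * Real.cos (ε * d * s) : ℝ) : ℂ) := by
  have hε' : ε ≠ 0 := hε.ne'
  set a : ℝ → ℝ := fun s => Real.sqrt (1 - s ^ 2) ^ m * Real.cos (ε * d * s) with ha_def
  set b : ℝ → ℝ := fun s => Real.sqrt (1 - s ^ 2) ^ m * Real.sin (ε * d * s) with hb_def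
  have cont_a : Continuous a :=
    ((Real.continuous_sqrt.comp (continuous_const.sub (continuous_id.pow 2))).pow m).mul
      (Real.continuous_cos.comp (continuous_const.mul continuous_id))
  have cont_b : Continuous b :=
    ((Real.continuous_sqrt.comp (continuous_const.sub (continuous_id.pow 2))).pow m).mul
      (Real.continuous_sin.comp (continuous_const.mul continuous_id))
  -- Ioo to interval integral
  have h0 : (∫ t in Set.Ioo (-ε) ε,
        (A * Real.sqrt (ε ^ 2 - t ^ 2) ^ m) • Complex.exp (Complex.I * (d * t)))
      = ∫ t in (-ε)..ε, (A * Real.sqrt (ε ^ 2 - t ^ 2) ^ m) • Complex.exp (Complex.I * (d * t)) := by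
    rw [intervalIntegral.integral_of_le (by linarith), integral_Ioc_eq_integral_Ioo]
  rw [h0]
  -- substitution t = ε s
  have h1 := intervalIntegral.integral_comp_mul_left
    (fun t => (A * Real.sqrt (ε ^ 2 - t ^ 2) ^ m) • Complex.exp (Complex.I * (d * t))) hε'
    (a := (-1:ℝ)) (b := 1)
  simp only [mul_neg_one, mul_one] at h1
  have h1' : (∫ t in (-ε)..ε, (A * Real.sqrt (ε ^ 2 - t ^ 2) ^ m) • Complex.exp (Complex.I * (d * t)))
      = ε • ∫ x in (-1:ℝ)..1,
          (A * Real.sqrt (ε ^ 2 - (ε * x) ^ 2) ^ m) •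
            Complex.exp (Complex.I * ((d : ℝ) * ((ε * x : ℝ) : ℂ))) := by
    rw [h1, smul_smul, mul_inv_cancel₀ hε', one_smul]
  rw [h1']
  -- simplify integrand
  have h2 : ∀ s : ℝ, (A * Real.sqrt (ε ^ 2 - (ε * s) ^ 2) ^ m) •
        Complex.exp (Complex.I * ((d : ℝ) * ((ε * s : ℝ) : ℂ)))
      = (A * ε ^ m) • (((a s : ℝ) : ℂ) + ((b s : ℝ) : ℂ) * Complex.I) := by
    intro s
    have e1 : Real.sqrt (ε ^ 2 - (ε * s) ^ 2) = ε * Real.sqrt (1 - s ^ 2) := by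
      rw [show ε ^ 2 - (ε * s) ^ 2 = ε ^ 2 * (1 - s ^ 2) by ring,
        Real.sqrt_mul (sq_nonneg ε), Real.sqrt_sq hε.le]
    have e2 : Complex.I * ((d : ℝ) * ((ε * s : ℝ) : ℂ)) = ((ε * d * s : ℝ) : ℂ) * Complex.I := by
      push_cast; ring
    rw [e1, e2, Complex.exp_mul_I, mul_pow, Complex.real_smul, Complex.real_smul, ha_def, hb_def]
    push_cast
    ring
  simp only [h2]
  rw [intervalIntegral.integral_smul]
  have hint_a : IntervalIntegrable (fun s => ((a s : ℝ) : ℂ)) volume (-1) 1 :=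
    (Complex.continuous_ofReal.comp cont_a).intervalIntegrable _ _
  have hint_b : IntervalIntegrable (fun s => ((b s : ℝ) : ℂ) * Complex.I) volume (-1) 1 :=
    ((Complex.continuous_ofReal.comp cont_b).mul continuous_const).intervalIntegrable _ _
  rw [intervalIntegral.integral_add hint_a hint_b, intervalIntegral.integral_mul_const,
    intervalIntegral.integral_ofReal, intervalIntegral.integral_ofReal]
  -- odd part vanishes
  have hb0 : (∫ s in (-1:ℝ)..1, b s) = 0 := by
    apply odd_part_zero
    intro x
    simp only [hb_def]
    rw [show (-x) ^ 2 = x ^ 2 by ring, show ε * d * -x = -(ε * d * x) by ring, Real.sin_neg]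
    ring
  rw [hb0]
  simp only [Complex.ofReal_zero, zero_mul, add_zero]
  -- rpow to sqrt-pow
  have hcong : (∫ s in (-1:ℝ)..1, (1 - s ^ 2) ^ ((m:ℝ)/2) * Real.cos (ε * d * s))
      = ∫ s in (-1:ℝ)..1, a s := by
    apply intervalIntegral.integral_congr
    intro s hs
    rw [Set.uIcc_of_le (by norm_num)] at hs
    have hs1 : 0 ≤ 1 - s ^ 2 := by
      obtain ⟨h1, h2⟩ := hs
      nlinarith
    simp only [ha_def]
    rw [Real.sqrt_eq_rpow, ← Real.rpow_natCast ((1 - s ^ 2) ^ ((1:ℝ)/2)) m,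
      ← Real.rpow_mul hs1, show (1:ℝ)/2 * (m:ℝ) = (m:ℝ)/2 by ring]
  rw [hcong]
  -- scalars
  rw [smul_smul, smul_smul, Complex.real_smul, ← Complex.ofReal_mul]
  congr 1
  rcases eq_or_ne B 0 with rfl | hB
  · simp
  · field_simp
    ring

theorem charFun_uniform_ball (n : ℕ) (hn : 2 ≤ n) {Ω : Type*} [MeasurableSpace Ω]
    (P : Measure Ω) [IsProbabilityMeasure P]
    (ε : ℝ) (hε : 0 < ε) (Z : Ω → EuclideanSpace ℝ (Fin n)) (hZ : Measurable Z)
    (hlaw : Measure.map Z P =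
      (volume (Metric.ball (0 : EuclideanSpace ℝ (Fin n)) ε))⁻¹ •
        volume.restrict (Metric.ball (0 : EuclideanSpace ℝ (Fin n)) ε)) :
    (∀ u : EuclideanSpace ℝ (Fin n), u ≠ 0 →
      ∫ ω, Complex.exp (Complex.I * ((inner ℝ u (Z ω) : ℝ) : ℂ)) ∂P =
        ((((volume (Metric.ball (0 : EuclideanSpace ℝ (Fin (n - 1))) 1)).toReal /
            (volume (Metric.ball (0 : EuclideanSpace ℝ (Fin n)) 1)).toReal) *
          ∫ s in (-1 : ℝ)..1, (1 - s ^ 2) ^ (((n : ℝ) - 1) / 2) * Real.cos (ε * ‖u‖ * s)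
          : ℝ) : ℂ)) ∧
    (∀ u v : EuclideanSpace ℝ (Fin n), ‖u‖ = ‖v‖ →
      ∫ ω, Complex.exp (Complex.I * ((inner ℝ u (Z ω) : ℝ) : ℂ)) ∂P =
        ∫ ω, Complex.exp (Complex.I * ((inner ℝ v (Z ω) : ℝ) : ℂ)) ∂P) := by
  obtain ⟨m, rfl⟩ : ∃ m, n = m + 1 := ⟨n - 1, by omega⟩
  have hm : m ≠ 0 := by omega
  haveI : Nontrivial (EuclideanSpace ℝ (Fin m)) := by
    haveI : Nonempty (Fin m) := ⟨⟨0, by omega⟩⟩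
    infer_instance
  have key : ∀ u : EuclideanSpace ℝ (Fin (m+1)), u ≠ 0 →
      ∫ ω, Complex.exp (Complex.I * ((inner ℝ u (Z ω) : ℝ) : ℂ)) ∂P =
        ((((volume (Metric.ball (0 : EuclideanSpace ℝ (Fin (m + 1 - 1))) 1)).toReal /
            (volume (Metric.ball (0 : EuclideanSpace ℝ (Fin (m+1))) 1)).toReal) *
          ∫ s in (-1 : ℝ)..1, (1 - s ^ 2) ^ ((((m+1 : ℕ) : ℝ) - 1) / 2) * Real.cos (ε * ‖u‖ * s)
          : ℝ) : ℂ) := by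
    intro u hu
    rw [show (((m+1 : ℕ) : ℝ) - 1) = (m : ℝ) by push_cast; ring]
    -- Step A: reduce to a set integral over the ball
    have hg : AEStronglyMeasurable
        (fun x : EuclideanSpace ℝ (Fin (m+1)) =>
          Complex.exp (Complex.I * ((inner ℝ u x : ℝ) : ℂ))) (Measure.map Z P) :=
      Continuous.aestronglyMeasurable (Complex.continuous_exp.comp (continuous_const.mul
        (Complex.continuous_ofReal.comp (continuous_const.inner continuous_id))))
    rw [← integral_map hZ.aemeasurable hg, hlaw, integral_smul_measure]
    -- Step B: orthonormal basis with b 0 = u / ‖u‖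
    set e : EuclideanSpace ℝ (Fin (m+1)) := ‖u‖⁻¹ • u with he_def
    have he : ‖e‖ = 1 := norm_smul_inv_norm hu
    have horth : Orthonormal ℝ
        (({0} : Set (Fin (m+1))).restrict (fun _ : Fin (m+1) => e)) := by
      constructor
      · intro i; exact he
      · rintro ⟨i, hi⟩ ⟨j, hj⟩ hij
        simp only [Set.mem_singleton_iff] at hi hj
        exact absurd (by simp [hi, hj]) hij
    obtain ⟨b, hb⟩ := horth.exists_orthonormalBasis_extension_of_card_eq
      (by simp [finrank_euclideanSpace_fin])
    have hb0 : b 0 = e := hb 0 rfl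
    have hinner : ∀ x : EuclideanSpace ℝ (Fin (m+1)),
        (inner ℝ u x : ℝ) = ‖u‖ * b.repr x 0 := by
      intro x
      rw [b.repr_apply_apply x 0, hb0]
      have hue : u = ‖u‖ • e := by
        rw [he_def, smul_smul, mul_inv_cancel₀ (norm_ne_zero_iff.mpr hu), one_smul]
      conv_lhs => rw [hue]
      rw [real_inner_smul_left]
    simp only [hinner]
    -- Step C: transfer to coordinates
    have hmp : MeasurePreserving b.repr volume volume := b.measurePreserving_repr
    have hemb : MeasurableEmbedding (⇑b.repr) :=
      b.repr.toHomeomorph.measurableEmbedding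
    have hpre : ⇑b.repr ⁻¹' (ball (0 : EuclideanSpace ℝ (Fin (m+1))) ε)
        = ball (0 : EuclideanSpace ℝ (Fin (m+1))) ε := by
      ext x
      simp [mem_ball_zero_iff]
    have h3 := hmp.setIntegral_preimage_emb hemb
      (fun y : EuclideanSpace ℝ (Fin (m+1)) =>
        Complex.exp (Complex.I * ((‖u‖ : ℝ) * ((y 0 : ℝ) : ℂ))))
      (ball (0 : EuclideanSpace ℝ (Fin (m+1))) ε)
    rw [hpre] at h3
    simp only [Complex.ofReal_mul]
    rw [h3, key_slice m ε hε ‖u‖]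
    -- constants
    rw [Measure.addHaar_ball _ _ hε.le, finrank_euclideanSpace_fin]
    rw [ENNReal.toReal_inv, ENNReal.toReal_mul,
      ENNReal.toReal_ofReal (pow_nonneg hε.le _)]
    rw [main_calc m ε ‖u‖ _ _ hε, Complex.ofReal_mul]
  refine ⟨key, ?_⟩
  intro u v huv
  by_cases hu : u = 0
  · have hv : v = 0 := by
      rw [hu, norm_zero, eq_comm, norm_eq_zero] at huv
      exact huv
    rw [hu, hv]
  · have hv : v ≠ 0 := by
      intro h
      rw [h, norm_zero, norm_eq_zero] at huv
      exact hu huv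
    rw [key u hu, key v hv, huv]
end

section
/- For every m with 0 < m ≤ 2π and every real z with 0 < |z| ≤ m, one has sin z / z ≤ 1 − h(m)·z²/6, where h(m) = 2(1 − cos m)/m²; equivalently, sin z / z ≤ 1 − (1 − cos m)·z²/(3m²). -/
open Real Set

lemma mul_cos_le_sin {t : ℝ} (ht : 0 ≤ t) (ht' : t ≤ π) : t * Real.cos t ≤ Real.sin t := by
  rcases lt_or_ge t (π / 2) with h | h
  · have htan := Real.le_tan ht h
    have hcos : 0 < Real.cos t := Real.cos_pos_of_mem_Ioo ⟨by linarith [Real.pi_pos], h⟩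
    rw [Real.tan_eq_sin_div_cos, le_div_iff₀ hcos] at htan
    linarith
  · have hcos : Real.cos t ≤ 0 := Real.cos_nonpos_of_pi_div_two_le_of_le h (by linarith)
    have hsin : 0 ≤ Real.sin t := Real.sin_nonneg_of_nonneg_of_le_pi ht ht'
    nlinarith

lemma one_sub_cos_eq (t : ℝ) : 1 - Real.cos t = 2 * Real.sin (t / 2) ^ 2 := by
  have h := Real.cos_sq (t / 2)
  rw [show 2 * (t / 2) = t from by ring] at h
  nlinarith [Real.sin_sq_add_cos_sq (t / 2)]

lemma sin_div_anti {a b : ℝ} (ha : 0 < a) (hab : a ≤ b) (hb : b ≤ π) :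
    Real.sin b / b ≤ Real.sin a / a := by
  have hderiv : ∀ t ∈ interior (Icc a b),
      HasDerivAt (fun t => Real.sin t / t) ((Real.cos t * t - Real.sin t * 1) / t ^ 2) t := by
    intro t ht
    rw [interior_Icc] at ht
    exact (Real.hasDerivAt_sin t).div (hasDerivAt_id t) (by nlinarith [ht.1])
  have key : AntitoneOn (fun t => Real.sin t / t) (Icc a b) := by
    apply antitoneOn_of_deriv_nonpos (convex_Icc a b)
    · apply ContinuousOn.div Real.continuousOn_sin continuousOn_id
      intro t ht; exact ne_of_gt (lt_of_lt_of_le ha ht.1)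
    · intro t ht; exact ((hderiv t ht).differentiableAt).differentiableWithinAt
    · intro t ht
      rw [(hderiv t ht).deriv]
      rw [interior_Icc] at ht
      have ht0 : 0 < t := lt_trans ha ht.1
      have h1 : t * Real.cos t ≤ Real.sin t := mul_cos_le_sin ht0.le (by linarith [ht.2])
      have h2 : (0:ℝ) < t ^ 2 := by positivity
      apply div_nonpos_of_nonpos_of_nonneg <;> nlinarith
  exact key ⟨le_refl a, hab⟩ ⟨hab, le_refl b⟩ hab

theorem sin_div_le_one_sub (m : ℝ) (hm0 : 0 < m) (hm : m ≤ 2 * Real.pi)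
    (z : ℝ) (hz0 : 0 < |z|) (hz : |z| ≤ m) :
    Real.sin z / z ≤ 1 - (2 * (1 - Real.cos m) / m ^ 2) * z ^ 2 / 6 := by
  set h : ℝ := 2 * (1 - Real.cos m) / m ^ 2 with hh
  have hzz : Real.sin z / z = Real.sin |z| / |z| := by
    rcases abs_cases z with ⟨e, _⟩ | ⟨e, _⟩
    · rw [e]
    · rw [e, Real.sin_neg, neg_div_neg_eq]
  have hsq : z ^ 2 = |z| ^ 2 := (sq_abs z).symm
  rw [hzz, hsq]
  set w : ℝ := |z| with hw
  clear_value w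
  clear hzz hsq hw
  -- now prove for 0 < w ≤ m
  have hF'nonneg : ∀ t, 0 ≤ t → t ≤ m → 0 ≤ 1 - Real.cos t - h * t ^ 2 / 2 := by
    intro t ht0 htm
    rcases eq_or_lt_of_le ht0 with rfl | ht0'
    · simp
    · have hanti := sin_div_anti (a := t / 2) (b := m / 2) (by linarith) (by linarith)
        (by linarith)
      have hsint : 0 ≤ Real.sin (t / 2) := Real.sin_nonneg_of_nonneg_of_le_pi (by linarith)
        (by linarith [Real.pi_pos])
      have hsinm : 0 ≤ Real.sin (m / 2) := Real.sin_nonneg_of_nonneg_of_le_pi (by linarith)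
        (by linarith [Real.pi_pos])
      rw [div_le_div_iff₀ (by linarith) (by linarith)] at hanti
      have hkey : Real.sin (m / 2) ^ 2 * t ^ 2 ≤ Real.sin (t / 2) ^ 2 * m ^ 2 := by
        nlinarith [mul_le_mul hanti hanti (by positivity) (by positivity :
          (0:ℝ) ≤ Real.sin (t / 2) * (m / 2))]
      have hbound : h * t ^ 2 / 2 ≤ 1 - Real.cos t := by
        rw [one_sub_cos_eq t, hh, one_sub_cos_eq m, div_mul_eq_mul_div, div_div,
          div_le_iff₀ (by positivity)]
        nlinarith
      linarith
  have key : ∀ t, 0 ≤ t → t ≤ m → Real.sin t ≤ t - h * t ^ 3 / 6 := by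
    intro w hw0 hwm
    have hd : ∀ t : ℝ, HasDerivAt (fun t => t - Real.sin t - h * t ^ 3 / 6)
        (1 - Real.cos t - h * (3 * t ^ 2) / 6) t := by
      intro t
      have h1 : HasDerivAt (fun t : ℝ => t) 1 t := hasDerivAt_id t
      have h2 := Real.hasDerivAt_sin t
      have h3 : HasDerivAt (fun t : ℝ => h * t ^ 3 / 6) (h * (3 * t ^ 2) / 6) t := by
        have := ((hasDerivAt_pow 3 t).const_mul h).div_const 6
        simpa using this
      exact (h1.sub h2).sub h3
    have hmono : MonotoneOn (fun t => t - Real.sin t - h * t ^ 3 / 6) (Icc 0 m) := by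
      apply monotoneOn_of_deriv_nonneg (convex_Icc 0 m)
      · exact Continuous.continuousOn (by continuity)
      · intro t ht; exact ((hd t).differentiableAt).differentiableWithinAt
      · intro t ht
        rw [(hd t).deriv]
        rw [interior_Icc] at ht
        have := hF'nonneg t ht.1.le ht.2.le
        linarith
    have := hmono (Set.mem_Icc.2 ⟨le_refl 0, hm0.le⟩) (Set.mem_Icc.2 ⟨hw0, hwm⟩) hw0
    simp only [Real.sin_zero] at this
    have h0 : (0:ℝ) - 0 - h * 0 ^ 3 / 6 = 0 := by ring
    simp at this
    linarith
  have hkw := key w hz0.le hz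
  rw [div_le_iff₀ hz0]
  nlinarith
end

section
/- Let Y₁, …, Y_N be independent and identically distributed ℝⁿ-valued random vectors whose common distribution is symmetric (Y₁ and −Y₁ have the same law) and which are uniformly bounded: |Y_m| ≤ b almost surely for all m, for some b > 0. Then for every λ > 0, P( max_{1 ≤ m ≤ N} |Σ_{i=1}^{m} Y_i| ≥ λ ) ≤ 4n · exp( −λ²/(2·N·b²·n) ). -/
open MeasureTheory ProbabilityTheory
open scoped ENNReal

section Aux

variable {Ω : Type*} [MeasurableSpace Ω] (P : Measure Ω) [IsProbabilityMeasure P]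

lemma aux_map_sum_symm {N : ℕ} (X : Fin N → Ω → ℝ) (hmeas : ∀ i, Measurable (X i))
    (hindep : iIndepFun X P)
    (hsymm : ∀ i, Measure.map (X i) P = Measure.map (fun ω => -(X i ω)) P)
    (s : Finset (Fin N)) :
    Measure.map (fun ω => ∑ i ∈ s, X i ω) P
      = Measure.map (fun ω => -∑ i ∈ s, X i ω) P := by
  classical
  induction s using Finset.induction_on with
  | empty => simp
  | @insert j s hj ih =>
    have hT : Measurable (fun ω => ∑ i ∈ s, X i ω) :=
      Finset.measurable_sum _ fun i _ => hmeas i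
    have hsum_eq : (∑ i ∈ s, X i) = fun ω => ∑ i ∈ s, X i ω := by
      ext ω; simp
    have hI : IndepFun (X j) (fun ω => ∑ i ∈ s, X i ω) P := by
      have := (hindep.indepFun_finsetSum_of_notMem hmeas hj).symm
      rwa [hsum_eq] at this
    have hIneg : IndepFun (fun ω => -(X j ω)) (fun ω => -∑ i ∈ s, X i ω) P :=
      hI.comp measurable_neg measurable_neg
    have hpair : Measure.map (fun ω => (X j ω, ∑ i ∈ s, X i ω)) P
        = (Measure.map (X j) P).prod (Measure.map (fun ω => ∑ i ∈ s, X i ω) P) :=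
      (indepFun_iff_map_prod_eq_prod_map_map (hmeas j).aemeasurable hT.aemeasurable).1 hI
    have hpairneg : Measure.map (fun ω => (-(X j ω), -∑ i ∈ s, X i ω)) P
        = (Measure.map (fun ω => -(X j ω)) P).prod
            (Measure.map (fun ω => -∑ i ∈ s, X i ω) P) :=
      (indepFun_iff_map_prod_eq_prod_map_map (hmeas j).neg.aemeasurable
        hT.neg.aemeasurable).1 hIneg
    calc Measure.map (fun ω => ∑ i ∈ insert j s, X i ω) P
        = Measure.map ((fun p : ℝ × ℝ => p.1 + p.2)
            ∘ (fun ω => (X j ω, ∑ i ∈ s, X i ω))) P := by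
          congr 1; ext ω; simp [Finset.sum_insert hj]
      _ = Measure.map (fun p : ℝ × ℝ => p.1 + p.2)
            (Measure.map (fun ω => (X j ω, ∑ i ∈ s, X i ω)) P) :=
          (Measure.map_map measurable_add ((hmeas j).prodMk hT)).symm
      _ = Measure.map (fun p : ℝ × ℝ => p.1 + p.2)
            ((Measure.map (fun ω => -(X j ω)) P).prod
              (Measure.map (fun ω => -∑ i ∈ s, X i ω) P)) := by
          rw [hpair, ← hsymm j, ← ih]
      _ = Measure.map (fun p : ℝ × ℝ => p.1 + p.2)
            (Measure.map (fun ω => (-(X j ω), -∑ i ∈ s, X i ω)) P) := by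
          rw [hpairneg]
      _ = Measure.map ((fun p : ℝ × ℝ => p.1 + p.2)
            ∘ (fun ω => (-(X j ω), -∑ i ∈ s, X i ω))) P :=
          Measure.map_map measurable_add ((hmeas j).neg.prodMk hT.neg)
      _ = Measure.map (fun ω => -∑ i ∈ insert j s, X i ω) P := by
          congr 1; ext ω; simp [Finset.sum_insert hj]; ring

lemma aux_one_le_two_mul (T : Ω → ℝ) (hT : Measurable T)
    (hsym : Measure.map T P = Measure.map (fun ω => -T ω) P) :
    1 ≤ 2 * P {ω | 0 ≤ T ω} := by
  have h1 : P {ω | T ω ≤ 0} = P {ω | 0 ≤ T ω} := by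
    have e1 : P {ω | T ω ≤ 0} = (Measure.map T P) (Set.Iic 0) := by
      rw [Measure.map_apply hT measurableSet_Iic]
      rfl
    have e2 : (Measure.map (fun ω => -T ω) P) (Set.Iic 0) = P {ω | 0 ≤ T ω} := by
      rw [Measure.map_apply (f := fun ω => -T ω) hT.neg measurableSet_Iic]
      congr 1
      ext ω
      simp [Set.mem_Iic]
    rw [e1, hsym, e2]
  have hcover : (Set.univ : Set Ω) ⊆ {ω | 0 ≤ T ω} ∪ {ω | T ω ≤ 0} := by
    intro ω _
    rcases le_total 0 (T ω) with h | h
    · exact Or.inl h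
    · exact Or.inr h
  calc (1 : ℝ≥0∞) = P Set.univ := (measure_univ).symm
    _ ≤ P ({ω | 0 ≤ T ω} ∪ {ω | T ω ≤ 0}) := measure_mono hcover
    _ ≤ P {ω | 0 ≤ T ω} + P {ω | T ω ≤ 0} := measure_union_le _ _
    _ = 2 * P {ω | 0 ≤ T ω} := by rw [h1, two_mul]

lemma aux_mgf_le (X : Ω → ℝ) (hX : Measurable X)
    (hsym : Measure.map X P = Measure.map (fun ω => -X ω) P)
    {b : ℝ} (hb : 0 < b) (hbdd : ∀ᵐ ω ∂P, |X ω| ≤ b) {t : ℝ} (ht : 0 ≤ t) :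
    mgf X P t ≤ Real.exp (t ^ 2 * b ^ 2 / 2) := by
  have hint1 : Integrable (fun ω => Real.exp (t * X ω)) P := by
    refine Integrable.mono' (integrable_const (Real.exp (t * b)))
      ((hX.const_mul t).exp.aestronglyMeasurable) ?_
    filter_upwards [hbdd] with ω hω
    rw [Real.norm_eq_abs, Real.abs_exp]
    exact Real.exp_le_exp.2 (mul_le_mul_of_nonneg_left
      ((le_abs_self _).trans hω) ht)
  have hint2 : Integrable (fun ω => Real.exp (t * (-X ω))) P := by
    refine Integrable.mono' (integrable_const (Real.exp (t * b)))
      ((hX.neg.const_mul t).exp.aestronglyMeasurable) ?_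
    filter_upwards [hbdd] with ω hω
    rw [Real.norm_eq_abs, Real.abs_exp]
    refine Real.exp_le_exp.2 (mul_le_mul_of_nonneg_left ?_ ht)
    exact (le_abs_self _).trans (by rwa [abs_neg])
  have hmapint : ∫ ω, Real.exp (t * X ω) ∂P = ∫ ω, Real.exp (t * (-X ω)) ∂P := by
    have hexp : Measurable fun x : ℝ => Real.exp (t * x) :=
      (measurable_id.const_mul t).exp
    have h1 : ∫ ω, Real.exp (t * X ω) ∂P
        = ∫ x, Real.exp (t * x) ∂(Measure.map X P) :=
      (integral_map hX.aemeasurable hexp.aestronglyMeasurable).symm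
    have h2 : ∫ x, Real.exp (t * x) ∂(Measure.map (fun ω => -X ω) P)
        = ∫ ω, Real.exp (t * (-X ω)) ∂P :=
      integral_map hX.neg.aemeasurable hexp.aestronglyMeasurable
    rw [h1, hsym, h2]
  have hcosh : mgf X P t = ∫ ω, Real.cosh (t * X ω) ∂P := by
    have hfun : (fun ω => Real.cosh (t * X ω))
        = fun ω => (Real.exp (t * X ω) + Real.exp (t * (-X ω))) / 2 := by
      funext ω
      rw [Real.cosh_eq]
      ring_nf
    rw [mgf, hfun]
    rw [integral_div, integral_add hint1 hint2, ← hmapint]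
    ring
  rw [hcosh]
  have hboundae : ∀ᵐ ω ∂P, Real.cosh (t * X ω) ≤ Real.cosh (t * b) := by
    filter_upwards [hbdd] with ω hω
    refine Real.cosh_le_cosh.2 ?_
    rw [abs_mul, abs_mul, abs_of_nonneg ht]
    exact mul_le_mul_of_nonneg_left (hω.trans (le_abs_self b)) ht
  have hintcosh : Integrable (fun ω => Real.cosh (t * X ω)) P := by
    refine Integrable.mono' (integrable_const (Real.cosh (t * b)))
      ((hX.const_mul t).cosh.aestronglyMeasurable) ?_
    filter_upwards [hboundae] with ω hω
    rw [Real.norm_eq_abs, abs_of_pos (Real.cosh_pos _)]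
    exact hω
  calc ∫ ω, Real.cosh (t * X ω) ∂P
      ≤ ∫ _ω, Real.cosh (t * b) ∂P :=
        integral_mono_ae hintcosh (integrable_const _) hboundae
    _ = Real.cosh (t * b) := by simp
    _ ≤ Real.exp ((t * b) ^ 2 / 2) := Real.cosh_le_exp_half_sq _
    _ = Real.exp (t ^ 2 * b ^ 2 / 2) := by rw [mul_pow]


lemma aux_chernoff (N : ℕ) (hN : 1 ≤ N) (X : Fin N → Ω → ℝ)
    (hmeas : ∀ i, Measurable (X i))
    (hindep : iIndepFun X P)
    (hsymm : ∀ i, Measure.map (X i) P = Measure.map (fun ω => -(X i ω)) P)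
    {b : ℝ} (hb : 0 < b) (hbdd : ∀ i, ∀ᵐ ω ∂P, |X i ω| ≤ b)
    {a : ℝ} (ha : 0 < a) :
    P {ω | a ≤ ∑ i, X i ω} ≤ ENNReal.ofReal (Real.exp (-a ^ 2 / (2 * N * b ^ 2))) := by
  have hNpos : (0 : ℝ) < N := by exact_mod_cast Nat.lt_of_lt_of_le Nat.zero_lt_one hN
  set t : ℝ := a / (N * b ^ 2) with ht_def
  have ht : 0 < t := div_pos ha (by positivity)
  have hball : ∀ᵐ ω ∂P, ∀ i, |X i ω| ≤ b := (ae_all_iff).2 hbdd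
  have hsumbdd : ∀ᵐ ω ∂P, |∑ i, X i ω| ≤ N * b := by
    filter_upwards [hball] with ω hω
    calc |∑ i, X i ω| ≤ ∑ i, |X i ω| := Finset.abs_sum_le_sum_abs _ _
      _ ≤ ∑ _i : Fin N, b := Finset.sum_le_sum fun i _ => hω i
      _ = N * b := by simp [Finset.sum_const, nsmul_eq_mul]
  have h_int : Integrable (fun ω => Real.exp (t * ∑ i, X i ω)) P := by
    refine Integrable.mono' (integrable_const (Real.exp (t * (N * b))))
      (((Finset.measurable_sum Finset.univ fun i _ => hmeas i).const_mul t).exp.aestronglyMeasurable) ?_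
    filter_upwards [hsumbdd] with ω hω
    rw [Real.norm_eq_abs, Real.abs_exp]
    exact Real.exp_le_exp.2 (mul_le_mul_of_nonneg_left ((le_abs_self _).trans hω) ht.le)
  have hch := measure_ge_le_exp_mul_mgf (X := fun ω => ∑ i, X i ω) (μ := P) (t := t)
    a ht.le h_int
  have hfun : (fun ω => ∑ i, X i ω) = ∑ i, X i := by ext ω; simp
  have hmgf : mgf (fun ω => ∑ i, X i ω) P t ≤ Real.exp (N * (t ^ 2 * b ^ 2 / 2)) := by
    rw [hfun, hindep.mgf_sum hmeas Finset.univ]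
    calc ∏ i : Fin N, mgf (X i) P t
        ≤ ∏ _i : Fin N, Real.exp (t ^ 2 * b ^ 2 / 2) :=
          Finset.prod_le_prod (fun i _ => mgf_nonneg)
            (fun i _ => aux_mgf_le P (X i) (hmeas i) (hsymm i) hb (hbdd i) ht.le)
      _ = Real.exp (t ^ 2 * b ^ 2 / 2) ^ (N : ℕ) := by
          simp [Finset.prod_const]
      _ = Real.exp (N * (t ^ 2 * b ^ 2 / 2)) := by
          rw [← Real.exp_nat_mul]
  have harith : -t * a + N * (t ^ 2 * b ^ 2 / 2) = -a ^ 2 / (2 * N * b ^ 2) := by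
    rw [ht_def]
    field_simp
    ring
  have hfinal : (P {ω | a ≤ ∑ i, X i ω}).toReal ≤ Real.exp (-a ^ 2 / (2 * N * b ^ 2)) := by
    calc (P {ω | a ≤ ∑ i, X i ω}).toReal
        ≤ Real.exp (-t * a) * mgf (fun ω => ∑ i, X i ω) P t := hch
      _ ≤ Real.exp (-t * a) * Real.exp (N * (t ^ 2 * b ^ 2 / 2)) := by
          exact mul_le_mul_of_nonneg_left hmgf (Real.exp_nonneg _)
      _ = Real.exp (-t * a + N * (t ^ 2 * b ^ 2 / 2)) := (Real.exp_add _ _).symm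
      _ = Real.exp (-a ^ 2 / (2 * N * b ^ 2)) := by rw [harith]
  rw [← ENNReal.ofReal_toReal (measure_ne_top P _)]
  exact ENNReal.ofReal_le_ofReal hfinal

lemma aux_levy (N : ℕ) (X : Fin N → Ω → ℝ) (hmeas : ∀ i, Measurable (X i))
    (hindep : iIndepFun X P)
    (hsymm : ∀ i, Measure.map (X i) P = Measure.map (fun ω => -(X i ω)) P)
    {a : ℝ} (ha : 0 < a) :
    P {ω | ∃ m : ℕ, 1 ≤ m ∧ m ≤ N ∧
        a ≤ ∑ i ∈ Finset.univ.filter (fun i : Fin N => (i : ℕ) < m), X i ω}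
      ≤ 2 * P {ω | a ≤ ∑ i, X i ω} := by
  classical
  set S : ℕ → Ω → ℝ :=
    fun m ω => ∑ i ∈ Finset.univ.filter (fun i : Fin N => (i : ℕ) < m), X i ω with hS_def
  set T : ℕ → Ω → ℝ :=
    fun m ω => ∑ i ∈ Finset.univ.filter (fun i : Fin N => ¬ (i : ℕ) < m), X i ω with hT_def
  have hSmeas : ∀ m, Measurable (S m) := fun m =>
    Finset.measurable_sum _ fun i _ => hmeas i
  have hTmeas : ∀ m, Measurable (T m) := fun m =>
    Finset.measurable_sum _ fun i _ => hmeas i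
  have hsplit : ∀ m ω, ∑ i, X i ω = S m ω + T m ω := by
    intro m ω
    exact (Finset.sum_filter_add_sum_filter_not Finset.univ
      (fun i : Fin N => (i : ℕ) < m) (fun i => X i ω)).symm
  set B : Set Ω := {ω | a ≤ ∑ i, X i ω} with hB_def
  set A : ℕ → Set Ω := fun m => {ω | a ≤ S m ω ∧ ∀ j < m, S j ω < a} with hA_def
  -- A m is measurable
  have hAmeas : ∀ m, MeasurableSet (A m) := by
    intro m
    have : A m = {ω | a ≤ S m ω} ∩ ⋂ (j : ℕ) (_ : j < m), {ω | S j ω < a} := by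
      ext ω
      simp only [hA_def, Set.mem_setOf_eq, Set.mem_inter_iff, Set.mem_iInter]
    rw [this]
    exact (measurableSet_le measurable_const (hSmeas m)).inter
      (MeasurableSet.iInter fun j => MeasurableSet.iInter fun _ =>
        measurableSet_lt (hSmeas j) measurable_const)
  have hBmeas : MeasurableSet B :=
    measurableSet_le measurable_const (Finset.measurable_sum _ fun i _ => hmeas i)
  -- covering
  have hcover : {ω | ∃ m : ℕ, 1 ≤ m ∧ m ≤ N ∧ a ≤ S m ω} ⊆ ⋃ m ∈ Finset.Icc 1 N, A m := by
    intro ω hω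
    have hex : ∃ m : ℕ, 1 ≤ m ∧ m ≤ N ∧ a ≤ S m ω := hω
    set m₀ := Nat.find hex with hm₀
    obtain ⟨h1, h2, h3⟩ := Nat.find_spec hex
    have hmem : m₀ ∈ Finset.Icc 1 N := Finset.mem_Icc.2 ⟨h1, h2⟩
    have hωA : ω ∈ A m₀ := by
      refine ⟨h3, fun j hj => ?_⟩
      by_contra hcon
      push_neg at hcon
      rcases Nat.eq_zero_or_pos j with rfl | hj1
      · have : S 0 ω = 0 := by
          simp [hS_def]
        rw [this] at hcon
        exact absurd (lt_of_lt_of_le ha hcon) (lt_irrefl _)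
      · exact Nat.find_min hex hj ⟨hj1, le_trans (le_of_lt hj) h2, hcon⟩
    exact Set.mem_biUnion hmem hωA
  -- disjointness
  have hdisj0 : ∀ m m' : ℕ, m < m' → Disjoint (A m) (A m') := by
    intro m m' hlt
    exact Set.disjoint_left.2 fun ω hωm hωm' => absurd hωm.1 (not_le.2 (hωm'.2 m hlt))
  have hdisj : (↑(Finset.Icc 1 N) : Set ℕ).PairwiseDisjoint A := by
    intro m _ m' _ hne
    rcases hne.lt_or_gt with h | h
    · exact hdisj0 _ _ h
    · exact (hdisj0 _ _ h).symm
  -- key per-m bound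
  have hkey : ∀ m ∈ Finset.Icc 1 N, P (A m) ≤ 2 * P (A m ∩ B) := by
    intro m hm
    obtain ⟨hm1, hm2⟩ := Finset.mem_Icc.1 hm
    set Sset : Set (Fin N) := {i : Fin N | (i : ℕ) < m} with hSset
    have hindep' : Indep (⨆ i ∈ Sset, MeasurableSpace.comap (X i) inferInstance)
        (⨆ i ∈ Ssetᶜ, MeasurableSpace.comap (X i) inferInstance) P :=
      indep_iSup_of_disjoint (fun i => measurable_iff_comap_le.1 (hmeas i)) hindep
        disjoint_compl_right
    have hXm₁ : ∀ i : Fin N, (i : ℕ) < m → Measurable[⨆ i ∈ Sset, MeasurableSpace.comap (X i) inferInstance] (X i) := by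
      intro i hi
      refine measurable_iff_comap_le.2 ?_
      exact le_iSup₂ (f := fun (i : Fin N) (_ : i ∈ Sset) =>
        MeasurableSpace.comap (X i) inferInstance) i hi
    have hSm₁ : ∀ j, j ≤ m → Measurable[⨆ i ∈ Sset, MeasurableSpace.comap (X i) inferInstance] (S j) := by
      intro j hj
      refine Finset.measurable_sum _ fun i hi => ?_
      exact hXm₁ i (lt_of_lt_of_le (Finset.mem_filter.1 hi).2 hj)
    have hA1 : MeasurableSet[⨆ i ∈ Sset, MeasurableSpace.comap (X i) inferInstance] (A m) := by
      have hAeq : A m = {ω | a ≤ S m ω} ∩ ⋂ (j : ℕ) (_ : j < m), {ω | S j ω < a} := by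
        ext ω; simp only [hA_def, Set.mem_setOf_eq, Set.mem_inter_iff, Set.mem_iInter]
      rw [hAeq]
      exact MeasurableSet.inter
        (measurableSet_le (measurable_const : Measurable[⨆ i ∈ Sset, MeasurableSpace.comap (X i) inferInstance] fun _ : Ω => a) (hSm₁ m le_rfl))
        (MeasurableSet.iInter fun j => MeasurableSet.iInter fun hj =>
          measurableSet_lt (hSm₁ j hj.le) (measurable_const : Measurable[⨆ i ∈ Sset, MeasurableSpace.comap (X i) inferInstance] fun _ : Ω => a))
    have hT2 : Measurable[⨆ i ∈ Ssetᶜ, MeasurableSpace.comap (X i) inferInstance] (T m) := by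
      refine Finset.measurable_sum _ fun i hi => ?_
      refine measurable_iff_comap_le.2 ?_
      refine le_iSup₂ (f := fun (i : Fin N) (_ : i ∈ Ssetᶜ) =>
        MeasurableSpace.comap (X i) inferInstance) i ?_
      exact (Finset.mem_filter.1 hi).2
    have hTset2 : MeasurableSet[⨆ i ∈ Ssetᶜ, MeasurableSpace.comap (X i) inferInstance] {ω | 0 ≤ T m ω} :=
      measurableSet_le (measurable_const : Measurable[⨆ i ∈ Ssetᶜ, MeasurableSpace.comap (X i) inferInstance] fun _ : Ω => (0 : ℝ)) hT2
    have hmul : P (A m ∩ {ω | 0 ≤ T m ω}) = P (A m) * P {ω | 0 ≤ T m ω} :=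
      (hindep'.indepSet_of_measurableSet hA1 hTset2).measure_inter_eq_mul
    have hhalf : 1 ≤ 2 * P {ω | 0 ≤ T m ω} :=
      aux_one_le_two_mul P (T m) (hTmeas m)
        (aux_map_sum_symm P X hmeas hindep hsymm _)
    have hsub2 : A m ∩ {ω | 0 ≤ T m ω} ⊆ A m ∩ B := by
      rintro ω ⟨hA', hT'⟩
      refine ⟨hA', ?_⟩
      have hs := hsplit m ω
      have h1 : a ≤ S m ω := hA'.1
      have h2 : (0 : ℝ) ≤ T m ω := hT'
      show a ≤ ∑ i, X i ω
      rw [hs]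
      linarith
    calc P (A m) = P (A m) * 1 := (mul_one _).symm
      _ ≤ P (A m) * (2 * P {ω | 0 ≤ T m ω}) := mul_le_mul_right hhalf _
      _ = 2 * (P (A m) * P {ω | 0 ≤ T m ω}) := by ring
      _ = 2 * P (A m ∩ {ω | 0 ≤ T m ω}) := by rw [hmul]
      _ ≤ 2 * P (A m ∩ B) := mul_le_mul_right (measure_mono hsub2) _
  -- put together
  calc P {ω | ∃ m : ℕ, 1 ≤ m ∧ m ≤ N ∧ a ≤ S m ω}
      ≤ P (⋃ m ∈ Finset.Icc 1 N, A m) := measure_mono hcover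
    _ ≤ ∑ m ∈ Finset.Icc 1 N, P (A m) := measure_biUnion_finset_le _ _
    _ ≤ ∑ m ∈ Finset.Icc 1 N, 2 * P (A m ∩ B) := Finset.sum_le_sum hkey
    _ = 2 * ∑ m ∈ Finset.Icc 1 N, P (A m ∩ B) := by rw [Finset.mul_sum]
    _ = 2 * P (⋃ m ∈ Finset.Icc 1 N, A m ∩ B) := by
        rw [measure_biUnion_finset (hdisj.mono fun m => Set.inter_subset_left)
          (fun m _ => (hAmeas m).inter hBmeas)]
    _ ≤ 2 * P B := by
        refine mul_le_mul_right (measure_mono ?_) _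
        exact Set.iUnion₂_subset fun m _ => Set.inter_subset_right

lemma aux_combined (N : ℕ) (hN : 1 ≤ N) (X : Fin N → Ω → ℝ)
    (hmeas : ∀ i, Measurable (X i))
    (hindep : iIndepFun X P)
    (hsymm : ∀ i, Measure.map (X i) P = Measure.map (fun ω => -(X i ω)) P)
    {b : ℝ} (hb : 0 < b) (hbdd : ∀ i, ∀ᵐ ω ∂P, |X i ω| ≤ b)
    {a : ℝ} (ha : 0 < a) :
    P {ω | ∃ m : ℕ, 1 ≤ m ∧ m ≤ N ∧
        a ≤ ∑ i ∈ Finset.univ.filter (fun i : Fin N => (i : ℕ) < m), X i ω}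
      ≤ ENNReal.ofReal (2 * Real.exp (-a ^ 2 / (2 * N * b ^ 2))) := by
  calc P {ω | ∃ m : ℕ, 1 ≤ m ∧ m ≤ N ∧
        a ≤ ∑ i ∈ Finset.univ.filter (fun i : Fin N => (i : ℕ) < m), X i ω}
      ≤ 2 * P {ω | a ≤ ∑ i, X i ω} := aux_levy P N X hmeas hindep hsymm ha
    _ ≤ 2 * ENNReal.ofReal (Real.exp (-a ^ 2 / (2 * N * b ^ 2))) :=
        mul_le_mul_right (aux_chernoff P N hN X hmeas hindep hsymm hb hbdd ha) _
    _ = ENNReal.ofReal (2 * Real.exp (-a ^ 2 / (2 * N * b ^ 2))) := by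
        rw [ENNReal.ofReal_mul (by norm_num : (0:ℝ) ≤ 2)]
        norm_num

end Aux

theorem hoeffding_max_partial_sums (n N : ℕ) (hn : 1 ≤ n) (hN : 1 ≤ N)
    {Ω : Type*} [MeasurableSpace Ω] (P : Measure Ω) [IsProbabilityMeasure P]
    (Y : Fin N → Ω → EuclideanSpace ℝ (Fin n)) (hmeas : ∀ i, Measurable (Y i))
    (hindep : iIndepFun Y P)
    (hident : ∀ i j, Measure.map (Y i) P = Measure.map (Y j) P)
    (hsymm : ∀ i, Measure.map (Y i) P = Measure.map (fun ω => -(Y i ω)) P)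
    (b : ℝ) (hb : 0 < b) (hbdd : ∀ i, ∀ᵐ ω ∂P, ‖Y i ω‖ ≤ b)
    (lam : ℝ) (hlam : 0 < lam) :
    (P {ω | ∃ m : ℕ, 1 ≤ m ∧ m ≤ N ∧
        lam ≤ ‖∑ i ∈ Finset.univ.filter (fun i : Fin N => (i : ℕ) < m), Y i ω‖}).toReal ≤
      4 * n * Real.exp (-lam ^ 2 / (2 * N * b ^ 2 * n)) := by
  classical
  have hn0 : (0 : ℝ) < n := by exact_mod_cast Nat.lt_of_lt_of_le Nat.zero_lt_one hn
  have hsq : (0 : ℝ) < Real.sqrt n := Real.sqrt_pos.2 hn0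
  set a : ℝ := lam / Real.sqrt n with ha_def
  have ha : 0 < a := div_pos hlam hsq
  have ha2 : a ^ 2 = lam ^ 2 / n := by
    rw [ha_def, div_pow, Real.sq_sqrt hn0.le]
  have hproj : ∀ k : Fin n, Measurable (fun x : EuclideanSpace ℝ (Fin n) => x k) :=
    fun k => (measurable_pi_apply k).comp (WithLp.measurable_ofLp 2 _)
  have hcoordsum : ∀ (k : Fin n) (s : Finset (Fin N)) (f : Fin N → EuclideanSpace ℝ (Fin n)),
      (∑ i ∈ s, f i) k = ∑ i ∈ s, f i k := by
    intro k s f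
    induction s using Finset.induction_on with
    | empty => rfl
    | @insert j s hj ih => rw [Finset.sum_insert hj, Finset.sum_insert hj, ← ih]; rfl
  have habs : ∀ (x : EuclideanSpace ℝ (Fin n)) (k : Fin n), |x k| ≤ ‖x‖ := by
    intro x k
    rw [EuclideanSpace.norm_eq, ← Real.sqrt_sq_eq_abs]
    apply Real.sqrt_le_sqrt
    have := Finset.single_le_sum (f := fun i => ‖x i‖ ^ 2)
      (fun i _ => sq_nonneg _) (Finset.mem_univ k)
    simpa [Real.norm_eq_abs, sq_abs] using this
  have hexists : ∀ x : EuclideanSpace ℝ (Fin n), lam ≤ ‖x‖ → ∃ k, a ≤ |x k| := by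
    intro x hx
    by_contra hcon
    push_neg at hcon
    have hnorm2 : ‖x‖ ^ 2 = ∑ k, ‖x k‖ ^ 2 := by
      rw [EuclideanSpace.norm_eq, Real.sq_sqrt]
      exact Finset.sum_nonneg fun k _ => sq_nonneg _
    have hne : (Finset.univ : Finset (Fin n)).Nonempty := by
      have : Nonempty (Fin n) := ⟨⟨0, hn⟩⟩
      exact Finset.univ_nonempty
    have hlt : ∑ k, ‖x k‖ ^ 2 < ∑ _k : Fin n, a ^ 2 := by
      refine Finset.sum_lt_sum_of_nonempty hne fun k _ => ?_
      rw [Real.norm_eq_abs]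
      exact pow_lt_pow_left₀ (hcon k) (abs_nonneg _) (by norm_num)
    have hsum : ∑ _k : Fin n, a ^ 2 = lam ^ 2 := by
      rw [Finset.sum_const, Finset.card_univ, Fintype.card_fin, nsmul_eq_mul, ha2]
      field_simp
    have h1 : lam ^ 2 ≤ ‖x‖ ^ 2 := pow_le_pow_left₀ hlam.le hx 2
    rw [hnorm2] at h1
    rw [hsum] at hlt
    linarith
  -- the 2n coordinate families
  set Xp : Fin n → Fin N → Ω → ℝ := fun k i ω => Y i ω k with hXp_def
  set Xm : Fin n → Fin N → Ω → ℝ := fun k i ω => -(Y i ω k) with hXm_def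
  have hXpmeas : ∀ k i, Measurable (Xp k i) := fun k i => (hproj k).comp (hmeas i)
  have hXmmeas : ∀ k i, Measurable (Xm k i) := fun k i => ((hproj k).comp (hmeas i)).neg
  have hXpindep : ∀ k, iIndepFun (Xp k) P := fun k =>
    hindep.comp (fun i x => x k) (fun i => hproj k)
  have hXmindep : ∀ k, iIndepFun (Xm k) P := fun k =>
    hindep.comp (fun i x => -(x k)) (fun i => (hproj k).neg)
  have hXpsymm : ∀ k i, Measure.map (Xp k i) P = Measure.map (fun ω => -(Xp k i ω)) P := by
    intro k i
    have h1 : Measure.map (Xp k i) P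
        = Measure.map (fun x : EuclideanSpace ℝ (Fin n) => x k) (Measure.map (Y i) P) :=
      (Measure.map_map (hproj k) (hmeas i)).symm
    have h2 : Measure.map (fun ω => -(Xp k i ω)) P
        = Measure.map (fun x : EuclideanSpace ℝ (Fin n) => x k)
            (Measure.map (fun ω => -(Y i ω)) P) :=
      (Measure.map_map (hproj k) (hmeas i).neg).symm
    rw [h1, h2, hsymm i]
  have hXmsymm : ∀ k i, Measure.map (Xm k i) P = Measure.map (fun ω => -(Xm k i ω)) P := by
    intro k i
    have h0 := hXpsymm k i
    have e1 : (fun ω => -(Xm k i ω)) = Xp k i := by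
      funext ω; simp [hXm_def, hXp_def]
    rw [e1]
    exact h0.symm
  have hXpbdd : ∀ k i, ∀ᵐ ω ∂P, |Xp k i ω| ≤ b := by
    intro k i
    filter_upwards [hbdd i] with ω hω
    exact (habs (Y i ω) k).trans hω
  have hXmbdd : ∀ k i, ∀ᵐ ω ∂P, |Xm k i ω| ≤ b := by
    intro k i
    filter_upwards [hbdd i] with ω hω
    rw [hXm_def, abs_neg]
    exact (habs (Y i ω) k).trans hω
  -- events
  set Ep : Fin n → Set Ω := fun k => {ω | ∃ m : ℕ, 1 ≤ m ∧ m ≤ N ∧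
    a ≤ ∑ i ∈ Finset.univ.filter (fun i : Fin N => (i : ℕ) < m), Xp k i ω} with hEp_def
  set Em : Fin n → Set Ω := fun k => {ω | ∃ m : ℕ, 1 ≤ m ∧ m ≤ N ∧
    a ≤ ∑ i ∈ Finset.univ.filter (fun i : Fin N => (i : ℕ) < m), Xm k i ω} with hEm_def
  have hincl : {ω | ∃ m : ℕ, 1 ≤ m ∧ m ≤ N ∧
      lam ≤ ‖∑ i ∈ Finset.univ.filter (fun i : Fin N => (i : ℕ) < m), Y i ω‖}
      ⊆ ⋃ k : Fin n, Ep k ∪ Em k := by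
    rintro ω ⟨m, hm1, hm2, hm3⟩
    obtain ⟨k, hk⟩ := hexists _ hm3
    rw [hcoordsum k] at hk
    refine Set.mem_iUnion.2 ⟨k, ?_⟩
    rcases abs_cases (∑ i ∈ Finset.univ.filter (fun i : Fin N => (i : ℕ) < m), Y i ω k) with
      ⟨he, _⟩ | ⟨he, _⟩
    · left
      rw [he] at hk
      exact ⟨m, hm1, hm2, hk⟩
    · right
      refine ⟨m, hm1, hm2, ?_⟩
      have : ∑ i ∈ Finset.univ.filter (fun i : Fin N => (i : ℕ) < m), Xm k i ω
          = -∑ i ∈ Finset.univ.filter (fun i : Fin N => (i : ℕ) < m), Y i ω k := by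
        rw [hXm_def, ← Finset.sum_neg_distrib]
      rw [this]
      rw [he] at hk
      exact hk
  -- main estimate
  set e : ℝ := Real.exp (-a ^ 2 / (2 * N * b ^ 2)) with he_def
  have hbound : ∀ k : Fin n, P (Ep k ∪ Em k) ≤ ENNReal.ofReal (4 * e) := by
    intro k
    calc P (Ep k ∪ Em k) ≤ P (Ep k) + P (Em k) := measure_union_le _ _
      _ ≤ ENNReal.ofReal (2 * e) + ENNReal.ofReal (2 * e) := by
          refine add_le_add ?_ ?_
          · exact aux_combined P N hN (Xp k) (hXpmeas k) (hXpindep k) (hXpsymm k)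
              hb (hXpbdd k) ha
          · exact aux_combined P N hN (Xm k) (hXmmeas k) (hXmindep k) (hXmsymm k)
              hb (hXmbdd k) ha
      _ = ENNReal.ofReal (4 * e) := by
          rw [← ENNReal.ofReal_add (by positivity) (by positivity)]
          ring_nf
  have hmain : P {ω | ∃ m : ℕ, 1 ≤ m ∧ m ≤ N ∧
      lam ≤ ‖∑ i ∈ Finset.univ.filter (fun i : Fin N => (i : ℕ) < m), Y i ω‖}
      ≤ ENNReal.ofReal (n * (4 * e)) := by
    calc P {ω | ∃ m : ℕ, 1 ≤ m ∧ m ≤ N ∧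
        lam ≤ ‖∑ i ∈ Finset.univ.filter (fun i : Fin N => (i : ℕ) < m), Y i ω‖}
        ≤ P (⋃ k : Fin n, Ep k ∪ Em k) := measure_mono hincl
      _ ≤ ∑ k : Fin n, P (Ep k ∪ Em k) := measure_iUnion_fintype_le _ _
      _ ≤ ∑ _k : Fin n, ENNReal.ofReal (4 * e) := Finset.sum_le_sum fun k _ => hbound k
      _ = (n : ℝ≥0∞) * ENNReal.ofReal (4 * e) := by
          rw [Finset.sum_const, Finset.card_univ, Fintype.card_fin, nsmul_eq_mul]
      _ = ENNReal.ofReal (n * (4 * e)) := by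
          rw [ENNReal.ofReal_mul (by positivity : (0:ℝ) ≤ (n:ℝ))]
          congr 1
          simp
  have hfinaleq : (n : ℝ) * (4 * e) = 4 * n * Real.exp (-lam ^ 2 / (2 * N * b ^ 2 * n)) := by
    have : -a ^ 2 / (2 * N * b ^ 2) = -lam ^ 2 / (2 * N * b ^ 2 * n) := by
      rw [ha2]
      field_simp
    rw [he_def, this]
    ring
  refine ENNReal.toReal_le_of_le_ofReal (by positivity) ?_
  rw [← hfinaleq]
  exact hmain
end

section
/- In the coupled setting below, there exist constants C > 0 and ε₀ > 0 (depending on α, t, r) such that for all 0 < ε < ε₀, P( 0.99·α·τ_g < U_{τ_g} < 1.01·α·τ_g ) ≥ 1 − C·ε. -/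
open MeasureTheory ProbabilityTheory
open scoped ENNReal

/-- `U_j`, the number of Bernoulli successes among the first `j` trials. -/
def bernCount {Ω : Type*} (b : ℕ → Ω → ℕ) (j : ℕ) (ω : Ω) : ℕ :=
  ∑ m ∈ Finset.range j, b m ω

/-- The vertical random walk `t̃_j = t + ε·Σ_{i=1}^j ξ_i`. -/
def vertWalk {Ω : Type*} (t ε : ℝ) (ξ : ℕ → Ω → ℝ) (j : ℕ) (ω : Ω) : ℝ :=
  t + ε * ∑ i ∈ Finset.range j, ξ i ω

/-- The exit time `τ_g = inf{ j ≥ 0 : t̃_{U_j} ∉ (0, r) }` of the coupled cylinder walk. -/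
noncomputable def tauG {Ω : Type*} (r t ε : ℝ) (ξ : ℕ → Ω → ℝ) (b : ℕ → Ω → ℕ) (ω : Ω) : ℕ :=
  sInf {j : ℕ | vertWalk t ε ξ (bernCount b j ω) ω ∉ Set.Ioo 0 r}


section CWTCAux
open Real
open scoped ENNReal

lemma exp_quad {x : ℝ} (hx : |x| ≤ 1) : Real.exp x ≤ 1 + x + x ^ 2 := by
  have h := Real.exp_bound hx (by norm_num : 0 < 2)
  rw [abs_le] at h
  have h2 : (∑ i ∈ Finset.range 2, x ^ i / i.factorial) = 1 + x := by
    simp [Finset.sum_range_succ]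
  rw [h2] at h
  have h3 : |x| ^ 2 = x ^ 2 := sq_abs x
  have h4 : ((2:ℕ).succ : ℝ) / ((2:ℕ).factorial * 2) = 3 / 4 := by
    norm_num [Nat.factorial]
  nlinarith [h.2, sq_nonneg x]


lemma bern_mgf_aux {α s : ℝ} (h0 : 0 < α) (h1 : α < 1) (hs : |s| ≤ 1) :
    α * Real.exp (s * (1 - α)) + (1 - α) * Real.exp (s * (0 - α)) ≤ Real.exp (s ^ 2) := by
  have hb1 : |s * (1 - α)| ≤ 1 := by
    rw [abs_mul]
    calc |s| * |1 - α| ≤ 1 * 1 := by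
          apply mul_le_mul hs _ (abs_nonneg _) zero_le_one
          rw [abs_le]; constructor <;> linarith
      _ = 1 := by ring
  have hb2 : |s * (0 - α)| ≤ 1 := by
    rw [abs_mul]
    calc |s| * |0 - α| ≤ 1 * 1 := by
          apply mul_le_mul hs _ (abs_nonneg _) zero_le_one
          rw [abs_le]; constructor <;> linarith
      _ = 1 := by ring
  have e1 := exp_quad hb1
  have e2 := exp_quad hb2
  have key : α * Real.exp (s * (1 - α)) + (1 - α) * Real.exp (s * (0 - α)) ≤
      1 + s ^ 2 * (α * (1-α)) := by nlinarith [sq_nonneg s]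
  have : (1 : ℝ) + s ^ 2 * (α * (1-α)) ≤ 1 + s ^ 2 := by nlinarith [sq_nonneg s]
  have h3 : (1 : ℝ) + s ^ 2 ≤ Real.exp (s ^ 2) := by
    have := Real.add_one_le_exp (s ^ 2); linarith
  linarith


lemma exp_neg_le_inv {x : ℝ} (hx : 0 < x) : Real.exp (-x) ≤ 1 / x := by
  rw [Real.exp_neg]
  rw [inv_eq_one_div]
  apply one_div_le_one_div_of_le hx
  have := Real.add_one_le_exp x; linarith


lemma nat_seq_hits (f : ℕ → ℕ) (h0 : f 0 = 0) (hstep : ∀ j, f (j+1) ≤ f j + 1)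
    (hub : ∀ M, ∃ j, M < f j) (k : ℕ) : ∃ j, f j = k := by
  classical
  have hex : ∃ j, k ≤ f j := (hub k).imp fun j hj => hj.le
  rcases k with _ | k'
  · exact ⟨0, h0⟩
  · have h1 : k' + 1 ≤ f (Nat.find hex) := Nat.find_spec hex
    have hj0pos : Nat.find hex ≠ 0 := by
      intro h; rw [h, h0] at h1; omega
    obtain ⟨j₁, hj₁⟩ := Nat.exists_eq_succ_of_ne_zero hj0pos
    have h2 : ¬ (k' + 1 ≤ f j₁) := Nat.find_min hex (by omega)
    have h3 := hstep j₁
    refine ⟨j₁ + 1, ?_⟩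
    rw [hj₁, Nat.succ_eq_add_one] at h1
    omega


lemma det_core {Ω : Type*} {α r t ε : ℝ} (hα0 : 0 < α)
    (ht0 : 0 < t) (htr : t < r) (hε : 0 < ε)
    {ξ : ℕ → Ω → ℝ} {b : ℕ → Ω → ℕ} {ω : Ω} {n₀ : ℕ}
    (hn₀ : (n₀ : ℝ) ≤ min t (r - t) / ε)
    (hbv : ∀ m, b m ω = 0 ∨ b m ω = 1)
    (hξv : ∀ i, ξ i ω = 1 ∨ ξ i ω = -1)
    (hdev : ∀ j, n₀ ≤ j → |(bernCount b j ω : ℝ) - α * j| < 0.01 * α * j)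
    (hexit : ∃ k, vertWalk t ε ξ k ω ∉ Set.Ioo 0 r) :
    0.99 * α * (tauG r t ε ξ b ω : ℝ) < (bernCount b (tauG r t ε ξ b ω) ω : ℝ) ∧
    (bernCount b (tauG r t ε ξ b ω) ω : ℝ) < 1.01 * α * (tauG r t ε ξ b ω : ℝ) := by
  set U : ℕ → ℕ := fun j => bernCount b j ω with hU
  have hδ₀ : 0 < min t (r - t) := lt_min ht0 (by linarith)
  have hU0 : U 0 = 0 := by simp [hU, bernCount]
  have hUstep : ∀ j, U (j+1) ≤ U j + 1 := by
    intro j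
    have : U (j+1) = U j + b j ω := Finset.sum_range_succ _ _
    rcases hbv j with h | h <;> omega
  have hUle : ∀ j, U j ≤ j := by
    intro j
    calc U j ≤ ∑ m ∈ Finset.range j, 1 := by
          apply Finset.sum_le_sum
          intro m _
          rcases hbv m with h | h <;> simp [h]
      _ = j := by simp
  -- unboundedness
  have hub : ∀ M, ∃ j, M < U j := by
    intro M
    set j := n₀ + (⌈((M:ℝ) + 1) / (0.99 * α)⌉₊ + 1) with hj
    refine ⟨j, ?_⟩
    have hjn₀ : n₀ ≤ j := by omega
    have h1 := hdev j hjn₀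
    have h2 : ((M:ℝ) + 1) / (0.99 * α) ≤ (j : ℝ) := by
      have : ((M:ℝ) + 1) / (0.99 * α) ≤ (⌈((M:ℝ) + 1) / (0.99 * α)⌉₊ : ℝ) :=
        Nat.le_ceil _
      have hcast : ((⌈((M:ℝ) + 1) / (0.99 * α)⌉₊ : ℝ)) ≤ (j : ℝ) := by
        rw [hj]; push_cast; have : (0:ℝ) ≤ (n₀:ℝ) := Nat.cast_nonneg _
        linarith
      linarith
    have hα99 : (0:ℝ) < 0.99 * α := by positivity
    have h3 : (M:ℝ) + 1 ≤ 0.99 * α * j := by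
      rw [div_le_iff₀ hα99] at h2; linarith
    have h4 : (M : ℝ) < (U j : ℝ) := by
      rw [abs_lt] at h1
      have h99 : (0.99 : ℝ) = 1 - 0.01 := by norm_num
      nlinarith [h1.1, h1.2]
    exact_mod_cast h4
  -- exit set nonempty, tau in it
  have hne : {j : ℕ | vertWalk t ε ξ (bernCount b j ω) ω ∉ Set.Ioo 0 r}.Nonempty := by
    obtain ⟨k, hk⟩ := hexit
    obtain ⟨j, hj⟩ := nat_seq_hits U hU0 hUstep hub k
    exact ⟨j, by rw [Set.mem_setOf_eq, show bernCount b j ω = k from hj]; exact hk⟩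
  set τ := tauG r t ε ξ b ω with hτ
  have hτmem : vertWalk t ε ξ (U τ) ω ∉ Set.Ioo 0 r := Nat.sInf_mem hne
  -- bound on |sum of xi|
  have hSb : ∀ k : ℕ, |∑ i ∈ Finset.range k, ξ i ω| ≤ (k : ℝ) := by
    intro k
    calc |∑ i ∈ Finset.range k, ξ i ω| ≤ ∑ i ∈ Finset.range k, |ξ i ω| :=
          Finset.abs_sum_le_sum_abs _ _
      _ ≤ ∑ i ∈ Finset.range k, 1 := by
          apply Finset.sum_le_sum
          intro i _
          rcases hξv i with h | h <;> simp [h]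
      _ = (k : ℝ) := by simp
  -- epsilon * U tau >= delta0
  have hεUτ : min t (r - t) ≤ ε * (U τ : ℝ) := by
    rw [vertWalk, Set.mem_Ioo, not_and_or, not_lt, not_lt] at hτmem
    have hb1 := hSb (U τ)
    rw [abs_le] at hb1
    rcases hτmem with h | h
    · have : ε * ∑ i ∈ Finset.range (U τ), ξ i ω ≤ -t := by linarith
      have h2 : t ≤ ε * (U τ : ℝ) := by nlinarith [hb1.1]
      exact le_trans (min_le_left _ _) h2
    · have : r - t ≤ ε * ∑ i ∈ Finset.range (U τ), ξ i ω := by linarith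
      have h2 : r - t ≤ ε * (U τ : ℝ) := by nlinarith [hb1.2]
      exact le_trans (min_le_right _ _) h2
  have hn₀Uτ : n₀ ≤ U τ := by
    have h1 : min t (r - t) / ε ≤ (U τ : ℝ) := by
      rw [div_le_iff₀ hε]; linarith
    exact_mod_cast hn₀.trans h1
  have hn₀τ : n₀ ≤ τ := hn₀Uτ.trans (hUle τ)
  have hUτpos : 1 ≤ U τ := by
    rcases Nat.eq_zero_or_pos (U τ) with h0 | h
    · rw [h0] at hεUτ; norm_num at hεUτ; rcases hεUτ with h1 | h1 <;> linarith
    · exact h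
  have hdevτ := hdev τ hn₀τ
  rw [abs_lt] at hdevτ
  have h99 : (0.99 : ℝ) = 1 - 0.01 := by norm_num
  have h101 : (1.01 : ℝ) = 1 + 0.01 := by norm_num
  constructor <;> nlinarith [hdevτ.1, hdevτ.2]


variable {Ω : Type*} [MeasurableSpace Ω] (P : Measure Ω) [IsProbabilityMeasure P]

lemma bern_ae {α : ℝ} (hα0 : 0 < α) (hα1 : α < 1) (g : Ω → ℕ) (hg : Measurable g)
    (h1 : P {ω | g ω = 1} = ENNReal.ofReal α) (h0 : P {ω | g ω = 0} = ENNReal.ofReal (1 - α)) :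
    ∀ᵐ ω ∂P, g ω = 0 ∨ g ω = 1 := by
  have hA1 : MeasurableSet {ω | g ω = 1} := hg (measurableSet_singleton 1)
  have hA0 : MeasurableSet {ω | g ω = 0} := hg (measurableSet_singleton 0)
  have hdisj : Disjoint {ω | g ω = 1} {ω | g ω = 0} := by
    rw [Set.disjoint_left]; intro ω hω1 hω0; simp only [Set.mem_setOf_eq] at *; omega
  have hunion : P ({ω | g ω = 1} ∪ {ω | g ω = 0}) = 1 := by
    rw [measure_union hdisj hA0, h1, h0, ← ENNReal.ofReal_add hα0.le (by linarith)]
    norm_num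
  have := (prob_compl_eq_zero_iff (hA1.union hA0)).mpr hunion
  rw [ae_iff]
  convert this using 2
  ext ω
  simp only [Set.mem_setOf_eq, Set.mem_compl_iff, Set.mem_union]
  tauto


lemma bern_mgf {α : ℝ} (hα0 : 0 < α) (hα1 : α < 1) (g : Ω → ℕ) (hg : Measurable g)
    (h1 : P {ω | g ω = 1} = ENNReal.ofReal α) (h0 : P {ω | g ω = 0} = ENNReal.ofReal (1 - α))
    {s : ℝ} (hs : |s| ≤ 1) :
    mgf (fun ω => ((g ω : ℝ) - α)) P s ≤ Real.exp (s ^ 2) := by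
  set A1 := {ω | g ω = 1} with hA1def
  set A0 := {ω | g ω = 0} with hA0def
  have hA1 : MeasurableSet A1 := hg (measurableSet_singleton 1)
  have hA0 : MeasurableSet A0 := hg (measurableSet_singleton 0)
  have hae := bern_ae P hα0 hα1 g hg h1 h0
  have heq : (fun ω => Real.exp (s * ((g ω : ℝ) - α))) =ᵐ[P]
      (fun ω => A1.indicator (fun _ => Real.exp (s * (1 - α))) ω
        + A0.indicator (fun _ => Real.exp (s * (0 - α))) ω) := by
    filter_upwards [hae] with ω hω
    rcases hω with hω | hω
    · have hω1 : ω ∉ A1 := by simp [hA1def, hω]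
      have hω0 : ω ∈ A0 := hω
      rw [Set.indicator_of_notMem hω1, Set.indicator_of_mem hω0]
      simp [hω]
    · have hω1 : ω ∈ A1 := hω
      have hω0 : ω ∉ A0 := by simp [hA0def, hω]
      rw [Set.indicator_of_mem hω1, Set.indicator_of_notMem hω0]
      simp [hω]
  have hint1 : Integrable (A1.indicator (fun _ => Real.exp (s * (1 - α)))) P :=
    (integrable_const _).indicator hA1
  have hint0 : Integrable (A0.indicator (fun _ => Real.exp (s * (0 - α)))) P :=
    (integrable_const _).indicator hA0
  have : mgf (fun ω => ((g ω : ℝ) - α)) P s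
      = α * Real.exp (s * (1 - α)) + (1 - α) * Real.exp (s * (0 - α)) := by
    rw [mgf, integral_congr_ae heq, integral_add hint1 hint0,
      integral_indicator_const _ hA1, integral_indicator_const _ hA0, measureReal_def, measureReal_def, h1, h0,
      ENNReal.toReal_ofReal hα0.le, ENNReal.toReal_ofReal (by linarith : (0:ℝ) ≤ 1 - α)]
    simp [smul_eq_mul]
  rw [this]
  exact bern_mgf_aux hα0 hα1 hs

lemma chernoff {α : ℝ} (hα0 : 0 < α) (hα1 : α < 1)
    (b : ℕ → Ω → ℕ) (hbmeas : ∀ m, Measurable (b m))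
    (hbindep : iIndepFun b P)
    (hb1 : ∀ m, P {ω | b m ω = 1} = ENNReal.ofReal α)
    (hb0 : ∀ m, P {ω | b m ω = 0} = ENNReal.ofReal (1 - α))
    {δ : ℝ} (hδ0 : 0 < δ) (hδ1 : δ ≤ 1) (j : ℕ) :
    P {ω | δ * j ≤ ∑ m ∈ Finset.range j, ((b m ω : ℝ) - α)} ≤
        ENNReal.ofReal (Real.exp (-(δ ^ 2 / 4) * j)) ∧
    P {ω | ∑ m ∈ Finset.range j, ((b m ω : ℝ) - α) ≤ -(δ * j)} ≤
        ENNReal.ofReal (Real.exp (-(δ ^ 2 / 4) * j)) := by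
  set Z : ℕ → Ω → ℝ := fun m ω => ((b m ω : ℝ) - α) with hZ
  set X : Ω → ℝ := fun ω => ∑ m ∈ Finset.range j, ((b m ω : ℝ) - α) with hX
  have hZmeas : ∀ m, Measurable (Z m) := fun m => (measurable_from_nat (f := fun n : ℕ => ((n : ℝ) - α))).comp (hbmeas m)
  have hZindep : iIndepFun Z P :=
    hbindep.comp (fun _ (n : ℕ) => ((n : ℝ) - α)) (fun _ => measurable_from_nat)
  have hfuneq : (∑ m ∈ Finset.range j, Z m) = X := by
    funext ω; simp [hX, hZ, Finset.sum_apply]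
  have hXmeas : Measurable X := by
    apply Finset.measurable_sum
    intro m _
    exact hZmeas m
  have hae : ∀ᵐ ω ∂P, ∀ m, b m ω = 0 ∨ b m ω = 1 :=
    MeasureTheory.ae_all_iff.mpr (fun m => bern_ae P hα0 hα1 (b m) (hbmeas m) (hb1 m) (hb0 m))
  have hXbd : ∀ᵐ ω ∂P, |X ω| ≤ (j : ℝ) := by
    filter_upwards [hae] with ω hω
    calc |X ω| ≤ ∑ m ∈ Finset.range j, |(b m ω : ℝ) - α| := Finset.abs_sum_le_sum_abs _ _
      _ ≤ ∑ m ∈ Finset.range j, 1 := by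
          apply Finset.sum_le_sum
          intro m _
          rcases hω m with h | h <;> rw [h] <;> [skip; skip] <;> rw [abs_le] <;>
            constructor <;> push_cast <;> linarith
      _ = (j : ℝ) := by simp
  have hint : ∀ u : ℝ, Integrable (fun ω => Real.exp (u * X ω)) P := by
    intro u
    apply Integrable.mono' (integrable_const (Real.exp (|u| * j)))
    · exact (Real.measurable_exp.comp (hXmeas.const_mul u)).aestronglyMeasurable
    · filter_upwards [hXbd] with ω hω
      rw [Real.norm_eq_abs, abs_of_pos (Real.exp_pos _), Real.exp_le_exp]
      calc u * X ω ≤ |u * X ω| := le_abs_self _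
        _ = |u| * |X ω| := abs_mul _ _
        _ ≤ |u| * j := by
            apply mul_le_mul_of_nonneg_left hω (abs_nonneg u)
  have hmgf : ∀ u : ℝ, |u| ≤ 1 → mgf X P u ≤ Real.exp (u ^ 2 * j) := by
    intro u hu
    rw [← hfuneq, hZindep.mgf_sum hZmeas]
    calc (∏ m ∈ Finset.range j, mgf (Z m) P u)
        ≤ ∏ m ∈ Finset.range j, Real.exp (u ^ 2) := by
          apply Finset.prod_le_prod
          · intro m _; exact mgf_nonneg
          · intro m _; exact bern_mgf P hα0 hα1 (b m) (hbmeas m) (hb1 m) (hb0 m) hu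
      _ = Real.exp (u ^ 2) ^ j := by rw [Finset.prod_const, Finset.card_range]
      _ = Real.exp (u ^ 2 * j) := by rw [mul_comm, Real.exp_nat_mul]
  set s : ℝ := δ / 2 with hs
  have hs0 : 0 ≤ s := by positivity
  have hs1 : |s| ≤ 1 := by rw [abs_of_nonneg hs0]; linarith
  have hexp_eq : Real.exp (-s * (δ * j)) * Real.exp (s ^ 2 * j)
      = Real.exp (-(δ ^ 2 / 4) * j) := by
    rw [← Real.exp_add]; congr 1; rw [hs]; ring
  constructor
  · have h1 := measure_ge_le_exp_mul_mgf (μ := P) (X := X) (δ * j) hs0 (hint s)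
    have h2 : Real.exp (-s * (δ * j)) * mgf X P s ≤ Real.exp (-(δ ^ 2 / 4) * j) := by
      rw [← hexp_eq]
      exact mul_le_mul_of_nonneg_left (hmgf s hs1) (Real.exp_pos _).le
    rw [ENNReal.le_ofReal_iff_toReal_le (measure_ne_top P _) (Real.exp_pos _).le]
    exact le_trans h1 h2
  · have h1 := measure_le_le_exp_mul_mgf (μ := P) (X := X) (-(δ * j))
      (by linarith : -s ≤ 0) (hint (-s))
    have hns : |(-s)| ≤ 1 := by rwa [abs_neg]
    have h3 := hmgf (-s) hns
    have h4 : ((-s) : ℝ) ^ 2 * j = s ^ 2 * j := by ring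
    rw [h4] at h3
    have h2 : Real.exp (-(-s) * (-(δ * j))) * mgf X P (-s) ≤ Real.exp (-(δ ^ 2 / 4) * j) := by
      calc Real.exp (-(-s) * (-(δ * j))) * mgf X P (-s)
          = Real.exp (-s * (δ * j)) * mgf X P (-s) := by
            rw [show -(-s) * (-(δ * (j:ℝ))) = -s * (δ * (j:ℝ)) from by ring]
        _ ≤ Real.exp (-s * (δ * j)) * Real.exp (s ^ 2 * j) :=
            mul_le_mul_of_nonneg_left h3 (Real.exp_pos _).le
        _ = Real.exp (-(δ ^ 2 / 4) * j) := hexp_eq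
    rw [ENNReal.le_ofReal_iff_toReal_le (measure_ne_top P _) (Real.exp_pos _).le]
    exact le_trans h1 h2

lemma no_exit_null (r t ε : ℝ) (hr : 0 < r) (hε : 0 < ε)
    (ξ : ℕ → Ω → ℝ) (hξmeas : ∀ i, Measurable (ξ i))
    (hξindep : iIndepFun ξ P)
    (hξ1 : ∀ i, P {ω | ξ i ω = 1} = 1 / 2) :
    P {ω | ∀ k, vertWalk t ε ξ k ω ∈ Set.Ioo 0 r} = 0 := by
  classical
  set N : ℕ := ⌈r / ε⌉₊ with hNdef
  have hN0 : 0 < N := Nat.ceil_pos.mpr (div_pos hr hε)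
  have hNr : r ≤ ε * N := by
    have := Nat.le_ceil (r / ε)
    rw [div_le_iff₀ hε] at this
    linarith [this]
  set D : ℕ → Set Ω := fun k => ⋂ j ∈ Finset.Ico (k * N) (k * N + N), ξ j ⁻¹' {1} with hD
  have hDmeas : ∀ k, MeasurableSet (D k) := fun k =>
    MeasurableSet.biInter (Finset.countable_toSet _)
      (fun j _ => (hξmeas j) (measurableSet_singleton 1))
  have hpre : ∀ j : ℕ, ξ j ⁻¹' {1} = {ω | ξ j ω = 1} := fun j => rfl
  have hPD : ∀ k, P (D k) = (1 / 2 : ℝ≥0∞) ^ N := by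
    intro k
    rw [hD]
    rw [hξindep.meas_biInter (S := Finset.Ico (k * N) (k * N + N))
      (s := fun j => ξ j ⁻¹' {1}) (fun j _ => ⟨{1}, measurableSet_singleton 1, rfl⟩)]
    rw [Finset.prod_congr rfl (fun j _ => by rw [hpre j, hξ1 j])]
    rw [Finset.prod_const, Nat.card_Ico]
    congr 1
    omega
  set ρ : ℝ≥0∞ := 1 - (1 / 2 : ℝ≥0∞) ^ N with hρdef
  have hPDc : ∀ k, P (D k)ᶜ = ρ := by
    intro k
    rw [measure_compl (hDmeas k) (measure_ne_top P _), hPD k, measure_univ]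
  -- product formula by induction
  have hprod : ∀ K : ℕ, P (⋂ k ∈ Finset.range K, (D k)ᶜ) = ρ ^ K := by
    intro K
    induction K with
    | zero => simp
    | succ K ih =>
      have hdisj : Disjoint (Finset.Ico (K * N) (K * N + N)) (Finset.range (K * N)) := by
        rw [Finset.disjoint_left]
        intro j hj hj'
        rw [Finset.mem_Ico] at hj
        rw [Finset.mem_range] at hj'
        omega
      have hindep := hξindep.indepFun_finset _ _ hdisj hξmeas
      have hmemA : ∀ (k : Fin K) (i : Fin N), k.1 * N + i.1 ∈ Finset.range (K * N) := by
        intro k i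
        rw [Finset.mem_range]
        calc k.1 * N + i.1 < k.1 * N + N := by omega
          _ = (k.1 + 1) * N := by ring
          _ ≤ K * N := Nat.mul_le_mul_right N k.2
      have hmemB : ∀ i : Fin N, K * N + i.1 ∈ Finset.Ico (K * N) (K * N + N) := by
        intro i
        rw [Finset.mem_Ico]
        omega
      set MA : Set ((j : (Finset.range (K * N) : Finset ℕ)) → ℝ) :=
        ⋂ (k : Fin K), ⋃ (i : Fin N), {x | x ⟨k.1 * N + i.1, hmemA k i⟩ ≠ 1} with hMA
      set MB : Set ((j : (Finset.Ico (K * N) (K * N + N) : Finset ℕ)) → ℝ) :=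
        ⋃ (i : Fin N), {x | x ⟨K * N + i.1, hmemB i⟩ ≠ 1} with hMB
      have hMAmeas : MeasurableSet MA := by
        apply MeasurableSet.iInter; intro k
        apply MeasurableSet.iUnion; intro i
        exact (measurable_pi_apply _) ((measurableSet_singleton 1).compl)
      have hMBmeas : MeasurableSet MB := by
        apply MeasurableSet.iUnion; intro i
        exact (measurable_pi_apply _) ((measurableSet_singleton 1).compl)
      have hnotD : ∀ (k : ℕ) (ω : Ω), ω ∉ D k ↔ ∃ i : Fin N, ξ (k * N + i.1) ω ≠ 1 := by
        intro k ω
        constructor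
        · intro hk
          have : ¬ ∀ j ∈ Finset.Ico (k * N) (k * N + N), ξ j ω = 1 := by
            intro hall
            exact hk (Set.mem_iInter₂.mpr fun j hj => hall j hj)
          push_neg at this
          obtain ⟨j, hj, hne⟩ := this
          rw [Finset.mem_Ico] at hj
          refine ⟨⟨j - k * N, by omega⟩, ?_⟩
          have hidx : k * N + (j - k * N) = j := by omega
          rw [hidx]
          exact hne
        · rintro ⟨i, hi⟩ hD'
          exact hi (Set.mem_iInter₂.mp hD' (k * N + i.1) (by rw [Finset.mem_Ico]; omega))
      have hAeq : (⋂ k ∈ Finset.range K, (D k)ᶜ)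
          = (fun a (i : (Finset.range (K * N) : Finset ℕ)) => ξ i.1 a) ⁻¹' MA := by
        ext ω
        rw [Set.mem_iInter₂, Set.mem_preimage, hMA, Set.mem_iInter]
        constructor
        · intro h k
          obtain ⟨i, hi⟩ := (hnotD k.1 ω).mp (h k.1 (Finset.mem_range.mpr k.2))
          exact Set.mem_iUnion.mpr ⟨i, hi⟩
        · intro h k hk
          rw [Set.mem_compl_iff, hnotD k ω]
          obtain ⟨i, hi⟩ := Set.mem_iUnion.mp (h ⟨k, Finset.mem_range.mp hk⟩)
          exact ⟨i, hi⟩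
      have hBeq : (D K)ᶜ
          = (fun a (i : (Finset.Ico (K * N) (K * N + N) : Finset ℕ)) => ξ i.1 a) ⁻¹' MB := by
        ext ω
        rw [Set.mem_compl_iff, Set.mem_preimage, hMB, hnotD K ω]
        constructor
        · rintro ⟨i, hi⟩; exact Set.mem_iUnion.mpr ⟨i, hi⟩
        · intro h; obtain ⟨i, hi⟩ := Set.mem_iUnion.mp h; exact ⟨i, hi⟩
      have hstep : P ((D K)ᶜ ∩ ⋂ k ∈ Finset.range K, (D k)ᶜ) = P (D K)ᶜ *
          P (⋂ k ∈ Finset.range K, (D k)ᶜ) := by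
        rw [hAeq, hBeq]
        exact hindep.measure_inter_preimage_eq_mul MB MA hMBmeas hMAmeas
      rw [Finset.range_add_one, Finset.set_biInter_insert, hstep, hPDc K, ih, pow_succ, mul_comm]
  -- the no-exit set is contained in every finite intersection
  have hsub : ∀ K : ℕ, {ω | ∀ k, vertWalk t ε ξ k ω ∈ Set.Ioo 0 r}
      ⊆ ⋂ k ∈ Finset.range K, (D k)ᶜ := by
    intro K ω hω
    rw [Set.mem_iInter₂]
    intro k _
    intro hDk
    have hall : ∀ j ∈ Finset.Ico (k * N) (k * N + N), ξ j ω = 1 :=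
      fun j hj => Set.mem_iInter₂.mp hDk j hj
    have hsum : ∑ i ∈ Finset.range (k * N + N), ξ i ω
        = (∑ i ∈ Finset.range (k * N), ξ i ω) + N := by
      rw [Finset.range_eq_Ico, ← Finset.sum_Ico_consecutive _ (Nat.zero_le (k * N))
        (by omega : k * N ≤ k * N + N), ← Finset.range_eq_Ico]
      congr 1
      rw [Finset.sum_congr rfl hall, Finset.sum_const, Nat.card_Ico,
        (by omega : k * N + N - k * N = N)]
      simp
    have h1 := hω (k * N)
    have h2 := hω (k * N + N)
    rw [Set.mem_Ioo] at h1 h2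
    rw [vertWalk] at h1 h2
    rw [hsum, mul_add] at h2
    have : ε * (N : ℝ) ≥ r := by
      have : (0:ℝ) ≤ ε * N := by positivity
      exact_mod_cast hNr
    nlinarith [h1.1, h2.2]
  -- conclude
  have hρlt : ρ < 1 := by
    apply ENNReal.sub_lt_self ENNReal.one_ne_top one_ne_zero
    exact pow_ne_zero _ (by norm_num)
  have htend := ENNReal.tendsto_pow_atTop_nhds_zero_of_lt_one hρlt
  have hle : ∀ K : ℕ, P {ω | ∀ k, vertWalk t ε ξ k ω ∈ Set.Ioo 0 r} ≤ ρ ^ K := by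
    intro K
    rw [← hprod K]
    exact measure_mono (hsub K)
  exact le_antisymm (ge_of_tendsto' htend hle) zero_le

end CWTCAux

theorem coupled_walk_time_comparison {Ω : Type*} [MeasurableSpace Ω]
    (P : Measure Ω) [IsProbabilityMeasure P]
    (α : ℝ) (hα0 : 0 < α) (hα1 : α < 1)
    (r t : ℝ) (hr : 0 < r) (ht : t ∈ Set.Ioo 0 r)
    (ξ : ℕ → Ω → ℝ) (hξmeas : ∀ i, Measurable (ξ i))
    (hξindep : iIndepFun ξ P)
    (hξ1 : ∀ i, P {ω | ξ i ω = 1} = 1 / 2)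
    (hξ2 : ∀ i, P {ω | ξ i ω = -1} = 1 / 2)
    (b : ℕ → Ω → ℕ) (hbmeas : ∀ m, Measurable (b m))
    (hbindep : iIndepFun b P)
    (hb1 : ∀ m, P {ω | b m ω = 1} = ENNReal.ofReal α)
    (hb0 : ∀ m, P {ω | b m ω = 0} = ENNReal.ofReal (1 - α))
    (hcross : IndepFun (fun ω i => ξ i ω) (fun ω m => b m ω) P) :
    ∃ C : ℝ, 0 < C ∧ ∃ ε₀ : ℝ, 0 < ε₀ ∧ ∀ ε : ℝ, 0 < ε → ε < ε₀ →
      1 - C * ε ≤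
        (P {ω | 0.99 * α * ((tauG r t ε ξ b ω : ℕ) : ℝ) <
              ((bernCount b (tauG r t ε ξ b ω) ω : ℕ) : ℝ) ∧
            ((bernCount b (tauG r t ε ξ b ω) ω : ℕ) : ℝ) <
              1.01 * α * ((tauG r t ε ξ b ω : ℕ) : ℝ)}).toReal := by
  classical
  obtain ⟨ht0, htr⟩ := ht
  -- basic constants
  set δ₀ : ℝ := min t (r - t) with hδ₀def
  have hδ₀ : 0 < δ₀ := lt_min ht0 (by linarith)
  set δ : ℝ := 0.01 * α with hδdef
  have hδ0 : 0 < δ := by rw [hδdef]; positivity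
  have hδ1 : δ ≤ 1 := by rw [hδdef]; nlinarith
  set c : ℝ := δ ^ 2 / 4 with hcdef
  have hc : 0 < c := by rw [hcdef]; positivity
  set q : ℝ := Real.exp (-c) with hqdef
  have hq0 : 0 < q := Real.exp_pos _
  have hq1 : q < 1 := by
    have := Real.exp_lt_exp.mpr (show -c < (0:ℝ) by linarith)
    rwa [Real.exp_zero] at this
  have h1q : 0 < 1 - q := by linarith
  set C : ℝ := 4 / ((1 - q) * c * δ₀) with hCdef
  have hC : 0 < C := by rw [hCdef]; positivity
  refine ⟨C, hC, δ₀ / 2, by positivity, ?_⟩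
  intro ε hε0 hεlt
  -- the threshold index
  set n₀ : ℕ := ⌊δ₀ / ε⌋₊ with hn₀def
  have hn₀le : (n₀ : ℝ) ≤ δ₀ / ε := Nat.floor_le (by positivity)
  have hgt2 : (2 : ℝ) < δ₀ / ε := by
    rw [lt_div_iff₀ hε0]; linarith
  have hn₀big : δ₀ / (2 * ε) ≤ (n₀ : ℝ) := by
    have h1 : δ₀ / ε < (n₀ : ℝ) + 1 := Nat.lt_floor_add_one _
    have h2 : δ₀ / (2 * ε) = (δ₀ / ε) / 2 := by ring
    linarith
  have hn₀R : (1 : ℝ) < (n₀ : ℝ) := by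
    have : (1:ℝ) < (δ₀ / ε) / 2 := by linarith
    have h2 : δ₀ / (2 * ε) = (δ₀ / ε) / 2 := by ring
    linarith
  -- a.e. value facts
  have hbae : ∀ᵐ ω ∂P, ∀ m, b m ω = 0 ∨ b m ω = 1 :=
    MeasureTheory.ae_all_iff.mpr (fun m => bern_ae P hα0 hα1 (b m) (hbmeas m) (hb1 m) (hb0 m))
  have hξae : ∀ᵐ ω ∂P, ∀ i, ξ i ω = 1 ∨ ξ i ω = -1 := by
    rw [MeasureTheory.ae_all_iff]
    intro i
    have hA1 : MeasurableSet {ω | ξ i ω = 1} := (hξmeas i) (measurableSet_singleton 1)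
    have hA2 : MeasurableSet {ω | ξ i ω = -1} := (hξmeas i) (measurableSet_singleton (-1))
    have hdisj : Disjoint {ω | ξ i ω = 1} {ω | ξ i ω = -1} := by
      rw [Set.disjoint_left]
      intro ω h1 h2
      simp only [Set.mem_setOf_eq] at h1 h2
      rw [h1] at h2
      norm_num at h2
    have hunion : P ({ω | ξ i ω = 1} ∪ {ω | ξ i ω = -1}) = 1 := by
      rw [measure_union hdisj hA2, hξ1 i, hξ2 i, ENNReal.add_halves]
    have h0 := (prob_compl_eq_zero_iff (hA1.union hA2)).mpr hunion
    rw [ae_iff]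
    have hset : {a : Ω | ¬(ξ i a = 1 ∨ ξ i a = -1)} = ({ω | ξ i ω = 1} ∪ {ω | ξ i ω = -1})ᶜ := by
      ext ω
      simp only [Set.mem_setOf_eq, Set.mem_compl_iff, Set.mem_union]
    rw [hset]
    exact h0
  -- bad events
  set DevHi : ℕ → Set Ω := fun j =>
    {ω | δ * j ≤ ∑ m ∈ Finset.range j, ((b m ω : ℝ) - α)} with hDevHi
  set DevLo : ℕ → Set Ω := fun j =>
    {ω | ∑ m ∈ Finset.range j, ((b m ω : ℝ) - α) ≤ -(δ * j)} with hDevLo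
  set B1 : Set Ω := {ω | ¬ ∀ m, b m ω = 0 ∨ b m ω = 1} with hB1def
  set B2 : Set Ω := {ω | ¬ ∀ i, ξ i ω = 1 ∨ ξ i ω = -1} with hB2def
  set B3 : Set Ω := {ω | ∀ k, vertWalk t ε ξ k ω ∈ Set.Ioo 0 r} with hB3def
  set B4 : Set Ω := ⋃ i : ℕ, (DevHi (n₀ + i) ∪ DevLo (n₀ + i)) with hB4def
  -- probability of bad events
  have hPB1 : P B1 = 0 := ae_iff.mp hbae
  have hPB2 : P B2 = 0 := ae_iff.mp hξae
  have hPB3 : P B3 = 0 := no_exit_null P r t ε hr hε0 ξ hξmeas hξindep hξ1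
  set A : ℝ := 2 * Real.exp (-(c * n₀)) with hAdef
  have hPB4 : P B4 ≤ ENNReal.ofReal (C * ε) := by
    have hAq : ∀ i : ℕ, Real.exp (-(δ ^ 2 / 4) * ((n₀ + i : ℕ) : ℝ)) +
        Real.exp (-(δ ^ 2 / 4) * ((n₀ + i : ℕ) : ℝ)) = A * q ^ i := by
      intro i
      have hexpand : (-(δ ^ 2 / 4) * ((n₀ + i : ℕ) : ℝ)) = -(c * n₀) + (i : ℝ) * (-c) := by
        rw [hcdef]; push_cast; ring
      rw [hexpand, Real.exp_add, hAdef, hqdef, ← Real.exp_nat_mul]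
      ring
    have hstep : ∀ i : ℕ, P (DevHi (n₀ + i) ∪ DevLo (n₀ + i)) ≤
        ENNReal.ofReal (A * q ^ i) := by
      intro i
      have hch := chernoff P hα0 hα1 b hbmeas hbindep hb1 hb0 hδ0 hδ1 (n₀ + i)
      calc P (DevHi (n₀ + i) ∪ DevLo (n₀ + i))
          ≤ P (DevHi (n₀ + i)) + P (DevLo (n₀ + i)) := measure_union_le _ _
        _ ≤ ENNReal.ofReal (Real.exp (-(δ ^ 2 / 4) * ((n₀ + i : ℕ) : ℝ))) +
            ENNReal.ofReal (Real.exp (-(δ ^ 2 / 4) * ((n₀ + i : ℕ) : ℝ))) :=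
            add_le_add hch.1 hch.2
        _ = ENNReal.ofReal (A * q ^ i) := by
            rw [← ENNReal.ofReal_add (Real.exp_pos _).le (Real.exp_pos _).le, hAq i]
    have hsummable : Summable (fun i : ℕ => A * q ^ i) :=
      Summable.mul_left A (summable_geometric_of_lt_one hq0.le hq1)
    have hreal : (∑' i : ℕ, A * q ^ i) ≤ C * ε := by
      rw [tsum_mul_left, tsum_geometric_of_lt_one hq0.le hq1]
      have hcn : (0:ℝ) < c * n₀ := by positivity
      have hexp : Real.exp (-(c * (n₀:ℝ))) ≤ 1 / (c * n₀) := exp_neg_le_inv hcn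
      have h3 : 1 / (c * (n₀:ℝ)) ≤ 2 * ε / (c * δ₀) := by
        rw [div_le_div_iff₀ hcn (by positivity)]
        have h4 : δ₀ ≤ (n₀:ℝ) * (2 * ε) := by
          rw [div_le_iff₀ (by positivity : (0:ℝ) < 2 * ε)] at hn₀big
          linarith
        nlinarith
      have hAle : A ≤ 4 * ε / (c * δ₀) := by
        have h5 : (2:ℝ) * (2 * ε / (c * δ₀)) = 4 * ε / (c * δ₀) := by ring
        rw [hAdef]
        nlinarith
      have hCe : (4 * ε / (c * δ₀)) * (1 - q)⁻¹ = C * ε := by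
        rw [hCdef]
        field_simp
      calc A * (1 - q)⁻¹ ≤ (4 * ε / (c * δ₀)) * (1 - q)⁻¹ :=
            mul_le_mul_of_nonneg_right hAle (by positivity)
        _ = C * ε := hCe
    calc P B4 ≤ ∑' i : ℕ, P (DevHi (n₀ + i) ∪ DevLo (n₀ + i)) := measure_iUnion_le _
      _ ≤ ∑' i : ℕ, ENNReal.ofReal (A * q ^ i) := ENNReal.tsum_le_tsum hstep
      _ = ENNReal.ofReal (∑' i : ℕ, A * q ^ i) :=
          (ENNReal.ofReal_tsum_of_nonneg (fun i => by positivity) hsummable).symm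
      _ ≤ ENNReal.ofReal (C * ε) := ENNReal.ofReal_le_ofReal hreal
  -- covering: outside the bad events the conclusion holds
  set E : Set Ω := {ω | 0.99 * α * ((tauG r t ε ξ b ω : ℕ) : ℝ) <
        ((bernCount b (tauG r t ε ξ b ω) ω : ℕ) : ℝ) ∧
      ((bernCount b (tauG r t ε ξ b ω) ω : ℕ) : ℝ) <
        1.01 * α * ((tauG r t ε ξ b ω : ℕ) : ℝ)} with hEdef
  have hcover : ∀ ω, ω ∉ (B1 ∪ (B2 ∪ B3)) ∪ B4 → ω ∈ E := by
    intro ω hω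
    simp only [Set.mem_union, not_or] at hω
    obtain ⟨⟨h1, h2, h3⟩, h4⟩ := hω
    have hbv : ∀ m, b m ω = 0 ∨ b m ω = 1 := not_not.mp h1
    have hξv : ∀ i, ξ i ω = 1 ∨ ξ i ω = -1 := not_not.mp h2
    have hexit : ∃ k, vertWalk t ε ξ k ω ∉ Set.Ioo 0 r := by
      rw [hB3def, Set.mem_setOf_eq] at h3
      push_neg at h3
      exact h3
    have hdev : ∀ j, n₀ ≤ j → |(bernCount b j ω : ℝ) - α * j| < 0.01 * α * j := by
      intro j hj
      have hDj : ω ∉ DevHi j ∪ DevLo j := by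
        have hji : n₀ + (j - n₀) = j := by omega
        intro hmem
        apply h4
        rw [hB4def, Set.mem_iUnion]
        exact ⟨j - n₀, by rw [hji]; exact hmem⟩
      rw [Set.mem_union, not_or] at hDj
      obtain ⟨hhi, hlo⟩ := hDj
      rw [hDevHi, Set.mem_setOf_eq, not_le] at hhi
      rw [hDevLo, Set.mem_setOf_eq, not_le] at hlo
      have hS : (bernCount b j ω : ℝ) - α * j = ∑ m ∈ Finset.range j, ((b m ω : ℝ) - α) := by
        rw [bernCount]
        push_cast
        rw [Finset.sum_sub_distrib, Finset.sum_const, Finset.card_range]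
        ring
      rw [hS, abs_lt]
      constructor
      · rw [hδdef] at hlo; linarith
      · rw [hδdef] at hhi; linarith
    have hn₀ε : (n₀ : ℝ) ≤ min t (r - t) / ε := hn₀le
    exact det_core hα0 ht0 htr hε0 hn₀ε hbv hξv hdev hexit
  -- assemble
  have hsubset : (Set.univ : Set Ω) ⊆ E ∪ ((B1 ∪ (B2 ∪ B3)) ∪ B4) := by
    intro ω _
    by_cases h : ω ∈ (B1 ∪ (B2 ∪ B3)) ∪ B4
    · exact Or.inr h
    · exact Or.inl (hcover ω h)
  have hPBad : P ((B1 ∪ (B2 ∪ B3)) ∪ B4) ≤ ENNReal.ofReal (C * ε) := by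
    calc P ((B1 ∪ (B2 ∪ B3)) ∪ B4) ≤ P (B1 ∪ (B2 ∪ B3)) + P B4 := measure_union_le _ _
      _ = P B4 := by
          rw [measure_union_null hPB1 (measure_union_null hPB2 hPB3), zero_add]
      _ ≤ ENNReal.ofReal (C * ε) := hPB4
  have hkey : (1 : ℝ≥0∞) ≤ P E + ENNReal.ofReal (C * ε) := by
    calc (1 : ℝ≥0∞) = P Set.univ := measure_univ.symm
      _ ≤ P (E ∪ ((B1 ∪ (B2 ∪ B3)) ∪ B4)) := measure_mono hsubset
      _ ≤ P E + P ((B1 ∪ (B2 ∪ B3)) ∪ B4) := measure_union_le _ _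
      _ ≤ P E + ENNReal.ofReal (C * ε) := add_le_add le_rfl hPBad
  have hfin : P E + ENNReal.ofReal (C * ε) ≠ ⊤ :=
    ENNReal.add_ne_top.mpr ⟨measure_ne_top P E, ENNReal.ofReal_ne_top⟩
  have h2 := ENNReal.toReal_mono hfin hkey
  rw [ENNReal.toReal_one, ENNReal.toReal_add (measure_ne_top P E) ENNReal.ofReal_ne_top,
    ENNReal.toReal_ofReal (by positivity : (0:ℝ) ≤ C * ε)] at h2
  linarith
end

section
/- For every integer h ≥ 0, one has (2h + 2)! · 2^h · √(2π) < 4^{h+1} · (h + 1)! · (h + 2.5)^{h + 1/2}. -/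
/-- Quadratic Bernoulli, division-free form. -/
lemma bern2 (a : ℝ) (ha : 0 < a) (n : ℕ) :
    (2*a^2 + 2*n*a + n*((n:ℝ)-1)) * a^n ≤ 2*a^2 * (a+1)^n := by
  induction n with
  | zero => norm_num
  | succ n ih =>
    have hb : (0:ℝ) ≤ a + 1 := by linarith
    have h1 := mul_le_mul_of_nonneg_right ih hb
    have h2 : (0:ℝ) ≤ a ^ n := le_of_lt (pow_pos ha n)
    have h3 : (0:ℝ) ≤ (n:ℝ) * ((n:ℝ)-1) := by
      rcases Nat.eq_zero_or_pos n with h | h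
      · simp [h]
      · have : (1:ℝ) ≤ (n:ℝ) := by exact_mod_cast h
        nlinarith
    push_cast
    push_cast at h1
    rw [pow_succ a n, pow_succ (a+1) n]
    nlinarith [h1, h2, h3, mul_nonneg h3 h2]

/-- Key inequality with natural exponents. -/
lemma key_nat (h : ℕ) :
    ((2*(h:ℝ)+3))^2 * ((h:ℝ)+2.5)^(2*h+1) ≤ ((h:ℝ)+3.5)^(2*h+3) := by
  set a : ℝ := (h:ℝ) + 2.5 with ha_def
  have ha : (0:ℝ) < a := by positivity
  have hb : ((h:ℝ)+3.5) = a + 1 := by rw [ha_def]; ring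
  rw [hb]
  have hber := bern2 a ha (2*h+1)
  have hpoly : 2*a^2 * (2*(h:ℝ)+3)^2 ≤
      (a+1)^2 * (2*a^2 + 2*(2*h+1:ℕ)*a + ((2*h+1:ℕ):ℝ)*(((2*h+1:ℕ):ℝ)-1)) := by
    push_cast
    rw [ha_def]
    have hh : (0:ℝ) ≤ (h:ℝ) := Nat.cast_nonneg h
    nlinarith [sq_nonneg ((h:ℝ)), sq_nonneg ((h:ℝ)^2), hh, sq_nonneg ((h:ℝ)+1)]
  have hpow : (0:ℝ) ≤ a^(2*h+1) := le_of_lt (pow_pos ha _)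
  have h2a : (0:ℝ) < 2*a^2 := by positivity
  have step1 : 2*a^2 * ((2*(h:ℝ)+3)^2 * a^(2*h+1)) ≤ 2*a^2 * (a+1)^(2*h+3) := by
    have c1 : 2*a^2 * (2*(h:ℝ)+3)^2 * a^(2*h+1) ≤
        (a+1)^2 * ((2*a^2 + 2*(2*h+1:ℕ)*a + ((2*h+1:ℕ):ℝ)*(((2*h+1:ℕ):ℝ)-1)) * a^(2*h+1)) := by
      calc 2*a^2 * (2*(h:ℝ)+3)^2 * a^(2*h+1)
          ≤ ((a+1)^2 * (2*a^2 + 2*(2*h+1:ℕ)*a + ((2*h+1:ℕ):ℝ)*(((2*h+1:ℕ):ℝ)-1))) * a^(2*h+1) :=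
            mul_le_mul_of_nonneg_right hpoly hpow
        _ = (a+1)^2 * ((2*a^2 + 2*(2*h+1:ℕ)*a + ((2*h+1:ℕ):ℝ)*(((2*h+1:ℕ):ℝ)-1)) * a^(2*h+1)) := by
            ring
    have c2 : (a+1)^2 * ((2*a^2 + 2*(2*h+1:ℕ)*a + ((2*h+1:ℕ):ℝ)*(((2*h+1:ℕ):ℝ)-1)) * a^(2*h+1)) ≤
        (a+1)^2 * (2*a^2 * (a+1)^(2*h+1)) := by
      apply mul_le_mul_of_nonneg_left hber (by positivity)
    calc 2*a^2 * ((2*(h:ℝ)+3)^2 * a^(2*h+1))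
        = 2*a^2 * (2*(h:ℝ)+3)^2 * a^(2*h+1) := by ring
      _ ≤ (a+1)^2 * ((2*a^2 + 2*(2*h+1:ℕ)*a + ((2*h+1:ℕ):ℝ)*(((2*h+1:ℕ):ℝ)-1)) * a^(2*h+1)) := c1
      _ ≤ (a+1)^2 * (2*a^2 * (a+1)^(2*h+1)) := c2
      _ = 2*a^2 * (a+1)^(2*h+3) := by ring
  exact le_of_mul_le_mul_left step1 h2a

/-- Key inequality with real exponents. -/
lemma key_rpow (h : ℕ) :
    (2*(h:ℝ)+3) * ((h:ℝ)+2.5) ^ ((h:ℝ)+1/2) ≤ ((h:ℝ)+3.5) ^ ((h:ℝ)+3/2) := by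
  have ha : (0:ℝ) < (h:ℝ) + 2.5 := by positivity
  have hb : (0:ℝ) < (h:ℝ) + 3.5 := by positivity
  have hL : (0:ℝ) ≤ (2*(h:ℝ)+3) * ((h:ℝ)+2.5) ^ ((h:ℝ)+1/2) := by positivity
  have hR : (0:ℝ) ≤ ((h:ℝ)+3.5) ^ ((h:ℝ)+3/2) := by positivity
  have hsq : ((2*(h:ℝ)+3) * ((h:ℝ)+2.5) ^ ((h:ℝ)+1/2))^2 ≤ (((h:ℝ)+3.5) ^ ((h:ℝ)+3/2))^2 := by
    have e1 : (((h:ℝ)+2.5) ^ ((h:ℝ)+1/2))^2 = ((h:ℝ)+2.5)^(2*h+1) := by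
      rw [← Real.rpow_natCast (((h:ℝ)+2.5) ^ ((h:ℝ)+1/2)) 2, ← Real.rpow_mul ha.le,
        ← Real.rpow_natCast ((h:ℝ)+2.5) (2*h+1)]
      congr 1
      push_cast
      ring
    have e2 : (((h:ℝ)+3.5) ^ ((h:ℝ)+3/2))^2 = ((h:ℝ)+3.5)^(2*h+3) := by
      rw [← Real.rpow_natCast (((h:ℝ)+3.5) ^ ((h:ℝ)+3/2)) 2, ← Real.rpow_mul hb.le,
        ← Real.rpow_natCast ((h:ℝ)+3.5) (2*h+3)]
      congr 1
      push_cast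
      ring
    calc ((2*(h:ℝ)+3) * ((h:ℝ)+2.5) ^ ((h:ℝ)+1/2))^2
        = (2*(h:ℝ)+3)^2 * (((h:ℝ)+2.5) ^ ((h:ℝ)+1/2))^2 := by ring
      _ = (2*(h:ℝ)+3)^2 * ((h:ℝ)+2.5)^(2*h+1) := by rw [e1]
      _ ≤ ((h:ℝ)+3.5)^(2*h+3) := key_nat h
      _ = (((h:ℝ)+3.5) ^ ((h:ℝ)+3/2))^2 := e2.symm
  exact (pow_le_pow_iff_left₀ hL hR (by norm_num)).mp hsq

theorem factorial_inequality_odd_case (h : ℕ) :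
    ((Nat.factorial (2 * h + 2) : ℝ)) * 2 ^ h * Real.sqrt (2 * Real.pi) <
      4 ^ (h + 1) * (Nat.factorial (h + 1) : ℝ) * ((h : ℝ) + 2.5) ^ ((h : ℝ) + 1 / 2) := by
  induction h with
  | zero =>
    have hπ : Real.pi < 5 := by linarith [Real.pi_lt_d2]
    have hπ0 : 0 < Real.pi := Real.pi_pos
    have e3 : ((0:ℕ):ℝ) + 2.5 = (2.5:ℝ) := by norm_num
    have e4 : ((0:ℕ):ℝ) + 1/2 = (1/2:ℝ) := by norm_num
    have f2 : (Nat.factorial (2*0+2) : ℝ) = 2 := by norm_num [Nat.factorial]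
    have f1 : (Nat.factorial (0+1) : ℝ) = 1 := by norm_num [Nat.factorial]
    rw [e3, e4, f2, f1, ← Real.sqrt_eq_rpow]
    have h10 : Real.sqrt 10 = 2 * Real.sqrt 2.5 := by
      rw [show (10:ℝ) = 2^2 * 2.5 by norm_num, Real.sqrt_mul (by positivity),
        Real.sqrt_sq (by norm_num)]
    have hlt : Real.sqrt (2*Real.pi) < Real.sqrt 10 :=
      Real.sqrt_lt_sqrt (by positivity) (by nlinarith)
    rw [h10] at hlt
    have hnn : 0 ≤ Real.sqrt (2*Real.pi) := Real.sqrt_nonneg _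
    calc (2:ℝ) * 2^(0:ℕ) * Real.sqrt (2*Real.pi) = 2 * Real.sqrt (2*Real.pi) := by
          rw [pow_zero, mul_one]
      _ < 4 * Real.sqrt 2.5 := by nlinarith
      _ = 4^(0+1) * 1 * Real.sqrt 2.5 := by norm_num
  | succ h ih =>
    have hfac : (Nat.factorial (2*(h+1)+2) : ℝ)
        = (2*(h:ℝ)+4)*(2*(h:ℝ)+3)*(Nat.factorial (2*h+2) : ℝ) := by
      have e : 2*(h+1)+2 = ((2*h+2)+1)+1 := by ring
      rw [e, Nat.factorial_succ, Nat.factorial_succ]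
      push_cast; ring
    have hfac2 : (Nat.factorial ((h+1)+1) : ℝ) = ((h:ℝ)+2)*(Nat.factorial (h+1) : ℝ) := by
      rw [Nat.factorial_succ]; push_cast; ring
    have hc : (0:ℝ) < 2*(2*(h:ℝ)+4)*(2*(h:ℝ)+3) := by positivity
    have step1 : (Nat.factorial (2*(h+1)+2) : ℝ) * 2^(h+1) * Real.sqrt (2*Real.pi)
        < (2*(2*(h:ℝ)+4)*(2*(h:ℝ)+3)) *
          (4^(h+1) * (Nat.factorial (h+1) : ℝ) * ((h:ℝ)+2.5)^((h:ℝ)+1/2)) := by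
      calc (Nat.factorial (2*(h+1)+2) : ℝ) * 2^(h+1) * Real.sqrt (2*Real.pi)
          = (2*(2*(h:ℝ)+4)*(2*(h:ℝ)+3)) *
            ((Nat.factorial (2*h+2) : ℝ) * 2^h * Real.sqrt (2*Real.pi)) := by
            rw [hfac]; ring
        _ < _ := mul_lt_mul_of_pos_left ih hc
    have step2 : (2*(2*(h:ℝ)+4)*(2*(h:ℝ)+3)) *
          (4^(h+1) * (Nat.factorial (h+1) : ℝ) * ((h:ℝ)+2.5)^((h:ℝ)+1/2))
        ≤ 4^((h+1)+1) * (Nat.factorial ((h+1)+1) : ℝ) * (((h+1:ℕ):ℝ)+2.5)^(((h+1:ℕ):ℝ)+1/2) := by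
      have e1 : ((h+1:ℕ):ℝ)+2.5 = (h:ℝ)+3.5 := by push_cast; ring
      have e2 : ((h+1:ℕ):ℝ)+1/2 = (h:ℝ)+3/2 := by push_cast; ring
      rw [e1, e2, hfac2]
      have hk := mul_le_mul_of_nonneg_left (key_rpow h)
        (show (0:ℝ) ≤ 4*((h:ℝ)+2)*4^(h+1)*(Nat.factorial (h+1) : ℝ) by positivity)
      calc (2*(2*(h:ℝ)+4)*(2*(h:ℝ)+3)) *
            (4^(h+1) * (Nat.factorial (h+1) : ℝ) * ((h:ℝ)+2.5)^((h:ℝ)+1/2))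
          = (4*((h:ℝ)+2)*4^(h+1)*(Nat.factorial (h+1) : ℝ)) *
            ((2*(h:ℝ)+3) * ((h:ℝ)+2.5)^((h:ℝ)+1/2)) := by ring
        _ ≤ (4*((h:ℝ)+2)*4^(h+1)*(Nat.factorial (h+1) : ℝ)) * (((h:ℝ)+3.5)^((h:ℝ)+3/2)) := hk
        _ = 4^((h+1)+1) * (((h:ℝ)+2)*(Nat.factorial (h+1) : ℝ)) * ((h:ℝ)+3.5)^((h:ℝ)+3/2) := by
            ring
    exact lt_of_lt_of_le step1 step2
end
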